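/- arXiv:1404.5153 — 10 statements merged into one kernel-verified Lean document; each statement's English description precedes it below -/
import Mathlib

section
/- For every integer n ≥ 2, every dimension d ≥ 1, every parity-oblivious quantum random access code {ρ_x : x ∈ {0,1}^n} of d×d density matrices, and every decoding strategy (M_t)_{t=1}^n, the worst-case bias satisfies min_{t ∈ {1,…,n}} (2 p_t − 1) ≤ 1/√n. -/
open Matrix Finset
open scoped ComplexOrder

/-!
Write `H_t = 2 M_t - 1` for the observable of the `t`-th measurement and
`A_x = ∑_t (-1)^{x_t} H_t`. Then `∑_t (2 p_t - 1)` is the average of `tr(ρ_x A_x)`, and by the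
Cauchy–Schwarz inequality `tr(ρ A)^2 ≤ tr(ρ A^2)` its square is at most the average of
`tr(ρ_x A_x^2)`. Expanding `A_x^2`, the cross terms `tr(ρ_x H_t H_u)` with `t ≠ u` carry the sign
of the parity `x_t + x_u` and cancel by parity-obliviousness, while `H_t^2 ≤ 1`. Hence
`(∑_t (2 p_t - 1))^2 ≤ n`, and the smallest of the `n` biases is at most `√n / n = 1 / √n`.
-/

namespace Matrix

variable {m : Type*} [Fintype m] [DecidableEq m]

open scoped MatrixOrder in
lemma PosSemidef.trace_mul_nonneg {𝕜 : Type*} [RCLike 𝕜] {A B : Matrix m m 𝕜}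
    (hA : A.PosSemidef) (hB : B.PosSemidef) : 0 ≤ (A * B).trace := by
  obtain ⟨C, rfl⟩ := CStarAlgebra.nonneg_iff_eq_star_mul_self.mp hB.nonneg
  rw [← mul_assoc, trace_mul_comm, ← mul_assoc]
  exact (hA.mul_mul_conjTranspose_same C).trace_nonneg

lemma PosSemidef.re_trace_mul_nonneg {A B : Matrix m m ℂ}
    (hA : A.PosSemidef) (hB : B.PosSemidef) : 0 ≤ (A * B).trace.re :=
  (Complex.nonneg_iff.mp (hA.trace_mul_nonneg hB)).1

/-- The variance `tr(ρ (A - a)^2)` with `a = tr(ρ A)` is nonnegative. -/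
lemma PosSemidef.sq_re_trace_mul_le {ρ A : Matrix m m ℂ} (hρ : ρ.PosSemidef)
    (hρ1 : ρ.trace = 1) (hA : A.IsHermitian) :
    (ρ * A).trace.re ^ 2 ≤ (ρ * (A * A)).trace.re := by
  set a := (ρ * A).trace.re
  have hB : (A - a • 1).IsHermitian := hA.sub (isHermitian_one.smul (IsSelfAdjoint.all a))
  have hvar := hρ.re_trace_mul_nonneg (hB.eq ▸ posSemidef_conjTranspose_mul_self (A - a • 1))
  have hexp : (A - a • 1) * (A - a • 1) = A * A - (2 * a) • A + a ^ 2 • 1 := by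
    simp only [sub_mul, mul_sub, smul_mul_assoc, mul_smul_comm, mul_one, one_mul]
    module
  rw [hexp] at hvar
  simp only [mul_add, mul_sub, mul_smul_comm, mul_one, trace_add, trace_sub, trace_smul, hρ1,
    Complex.add_re, Complex.sub_re, Complex.smul_re, smul_eq_mul, Complex.one_re] at hvar
  nlinarith

open scoped MatrixOrder in
lemma PosSemidef.mul_one_sub {𝕜 : Type*} [RCLike 𝕜] {M : Matrix m m 𝕜} (hM : M.PosSemidef)
    (h1M : (1 - M).PosSemidef) : (M * (1 - M)).PosSemidef :=
  (Commute.mul_nonneg hM.nonneg h1M.nonneg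
    ((Commute.one_right M).sub_right (Commute.refl M))).posSemidef

lemma PosSemidef.re_trace_mul_sq_two_smul_sub_one_le {σ M : Matrix m m ℂ} (hσ : σ.PosSemidef)
    (hM : M.PosSemidef) (h1M : (1 - M).PosSemidef) :
    (σ * (((2 : ℝ) • M - 1) * ((2 : ℝ) • M - 1))).trace.re ≤ σ.trace.re := by
  have hsq : ((2 : ℝ) • M - 1) * ((2 : ℝ) • M - 1) = 1 - (4 : ℝ) • (M * (1 - M)) := by
    simp only [sub_mul, mul_sub, smul_mul_assoc, mul_smul_comm, mul_one, one_mul]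
    module
  have h := hσ.re_trace_mul_nonneg (hM.mul_one_sub h1M)
  rw [hsq, mul_sub, mul_one, mul_smul_comm, trace_sub, trace_smul, Complex.sub_re,
    Complex.smul_re, smul_eq_mul]
  linarith

end Matrix

def bitSign (a : ZMod 2) : ℝ := if a = 0 then 1 else -1

lemma bitSign_add (a b : ZMod 2) : bitSign (a + b) = bitSign a * bitSign b := by
  have h2 : ∀ c : ZMod 2, c = 0 ∨ c = 1 := by decide
  rcases h2 a with rfl | rfl <;> rcases h2 b with rfl | rfl <;>
    simp [bitSign, CharTwo.add_self_eq_zero]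

lemma bitSign_mul_self (a : ZMod 2) : bitSign a * bitSign a = 1 := by
  rw [← bitSign_add, CharTwo.add_self_eq_zero, bitSign, if_pos rfl]

lemma sum_bitSign_smul_eq_zero {α V : Type*} [Fintype α] [AddCommGroup V] [Module ℝ V]
    (g : α → ZMod 2) (f : α → V)
    (h : ∑ x ∈ univ.filter (fun x => g x = 0), f x = ∑ x ∈ univ.filter (fun x => g x = 1), f x) :
    ∑ x, bitSign (g x) • f x = 0 := by
  have hfilter : univ.filter (fun x => ¬ g x = 0) = univ.filter (fun x => g x = 1) :=
    filter_congr fun x _ => by generalize g x = a; revert a; decide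
  simp only [bitSign, ite_smul, one_smul, neg_smul, sum_ite, sum_neg_distrib, hfilter, h]
  abel

section RandomAccessCode

variable {ι : Type*} [Fintype ι] [DecidableEq ι]

def IsParityOblivious {V : Type*} [AddCommMonoid V] (ρ : (ι → ZMod 2) → V) : Prop :=
  ∀ S : Finset ι, 2 ≤ S.card →
    ∑ x ∈ univ.filter (fun x : ι → ZMod 2 => ∑ i ∈ S, x i = 0), ρ x =
      ∑ x ∈ univ.filter (fun x : ι → ZMod 2 => ∑ i ∈ S, x i = 1), ρ x

lemma IsParityOblivious.sum_bitSign_mul_bitSign_smul_eq_zero {V : Type*} [AddCommGroup V]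
    [Module ℝ V] {ρ : (ι → ZMod 2) → V} (hρ : IsParityOblivious ρ) {t u : ι} (htu : t ≠ u) :
    ∑ x, (bitSign (x t) * bitSign (x u)) • ρ x = 0 := by
  simp only [← bitSign_add]
  have h := hρ {t, u} (card_pair htu).ge
  simp only [sum_pair htu] at h
  exact sum_bitSign_smul_eq_zero _ _ h

variable {m : Type*} [Fintype m] [DecidableEq m]

lemma IsParityOblivious.sum_trace_mul_sq {ρ : (ι → ZMod 2) → Matrix m m ℂ}
    (hρ : IsParityOblivious ρ) (H : ι → Matrix m m ℂ) :
    ∑ x, (ρ x * ((∑ t, bitSign (x t) • H t) * ∑ t, bitSign (x t) • H t)).trace =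
      ∑ t, ((∑ x, ρ x) * (H t * H t)).trace := by
  have hexp : ∀ x, (ρ x * ((∑ t, bitSign (x t) • H t) * ∑ t, bitSign (x t) • H t)).trace =
      ∑ u, ∑ t, ((bitSign (x u) * bitSign (x t)) • ρ x * (H t * H u)).trace := by
    intro x
    simp only [Matrix.sum_mul, Matrix.mul_sum, trace_sum, Matrix.smul_mul, Matrix.mul_smul,
      trace_smul, smul_sum, smul_smul]
  simp only [hexp]
  rw [sum_comm]
  refine sum_congr rfl fun u _ => ?_
  rw [sum_comm, sum_eq_single u]
  · simp only [← trace_sum, ← Matrix.sum_mul, bitSign_mul_self, one_smul]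
  · intro t _ htu
    rw [← trace_sum, ← Matrix.sum_mul, hρ.sum_bitSign_mul_bitSign_smul_eq_zero htu.symm,
      zero_mul, trace_zero]
  · exact fun h => absurd (mem_univ u) h

noncomputable def successProb (ρ : (ι → ZMod 2) → Matrix m m ℂ) (M : ι → Matrix m m ℂ)
    (t : ι) : ℝ :=
  (1 / 2 ^ Fintype.card ι : ℝ) * ∑ x : ι → ZMod 2,
    (if x t = 0 then (ρ x * M t).trace.re else (ρ x * (1 - M t)).trace.re)

lemma two_mul_successProb_sub_one {ρ : (ι → ZMod 2) → Matrix m m ℂ}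
    (htr : ∀ x, (ρ x).trace = 1) (M : ι → Matrix m m ℂ) (t : ι) :
    2 * successProb ρ M t - 1 = (1 / 2 ^ Fintype.card ι : ℝ) *
      ∑ x, bitSign (x t) * (ρ x * ((2 : ℝ) • M t - 1)).trace.re := by
  have hterm : ∀ x, bitSign (x t) * (ρ x * ((2 : ℝ) • M t - 1)).trace.re =
      2 * (if x t = 0 then (ρ x * M t).trace.re else (ρ x * (1 - M t)).trace.re) - 1 := by
    intro x
    simp only [mul_sub, mul_one, mul_smul_comm, trace_sub, trace_smul, htr x, Complex.sub_re,
      Complex.smul_re, smul_eq_mul, Complex.one_re, bitSign]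
    split_ifs <;> ring
  rw [sum_congr rfl fun x _ => hterm x, sum_sub_distrib, ← mul_sum, sum_const, card_univ,
    Fintype.card_fun, ZMod.card, successProb]
  field_simp
  ring

lemma sq_sum_two_mul_successProb_sub_one_le {ρ : (ι → ZMod 2) → Matrix m m ℂ}
    (hpsd : ∀ x, (ρ x).PosSemidef) (htr : ∀ x, (ρ x).trace = 1) (hρ : IsParityOblivious ρ)
    {M : ι → Matrix m m ℂ} (hM : ∀ t, (M t).PosSemidef) (h1M : ∀ t, (1 - M t).PosSemidef) :
    (∑ t, (2 * successProb ρ M t - 1)) ^ 2 ≤ Fintype.card ι := by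
  set N := Fintype.card ι
  set H : ι → Matrix m m ℂ := fun t => (2 : ℝ) • M t - 1
  set A : (ι → ZMod 2) → Matrix m m ℂ := fun x => ∑ t, bitSign (x t) • H t
  have hcard : Fintype.card (ι → ZMod 2) = 2 ^ N := by simp [N]
  have hA : ∀ x, (A x).IsHermitian := fun x =>
    isSelfAdjoint_sum _ fun t _ =>
      (((hM t).isHermitian.smul (IsSelfAdjoint.all 2)).sub isHermitian_one).smul
        (IsSelfAdjoint.all _)
  have hsum :
      ∑ t, (2 * successProb ρ M t - 1) = (1 / 2 ^ N : ℝ) * ∑ x, (ρ x * A x).trace.re := by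
    simp only [two_mul_successProb_sub_one htr, ← mul_sum, A, Matrix.mul_sum, trace_sum,
      Complex.re_sum, Matrix.mul_smul, trace_smul, Complex.smul_re, smul_eq_mul]
    rw [sum_comm]
  have hcs : (∑ x, (ρ x * A x).trace.re) ^ 2 ≤ 2 ^ N * ∑ x, (ρ x * (A x * A x)).trace.re := by
    refine sq_sum_le_card_mul_sum_sq.trans ?_
    rw [card_univ, hcard, Nat.cast_pow, Nat.cast_ofNat]
    gcongr with x
    exact (hpsd x).sq_re_trace_mul_le (htr x) (hA x)
  have hσ : (∑ x, ρ x).PosSemidef := posSemidef_sum _ fun x _ => hpsd x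
  have hσtr : (∑ x, ρ x).trace.re = 2 ^ N := by
    simp only [trace_sum, htr, sum_const, card_univ, hcard, nsmul_eq_mul, mul_one]
    norm_cast
  have hsq : ∑ x, (ρ x * (A x * A x)).trace.re ≤ N * 2 ^ N := by
    rw [← Complex.re_sum, hρ.sum_trace_mul_sq H, Complex.re_sum]
    calc ∑ t, ((∑ x, ρ x) * (H t * H t)).trace.re ≤ ∑ _t : ι, (2 : ℝ) ^ N :=
          sum_le_sum fun t _ => hσtr ▸ hσ.re_trace_mul_sq_two_smul_sub_one_le (hM t) (h1M t)
      _ = N * 2 ^ N := by simp [N]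
  rw [hsum, mul_pow]
  calc (1 / 2 ^ N : ℝ) ^ 2 * (∑ x, (ρ x * A x).trace.re) ^ 2
      ≤ (1 / 2 ^ N : ℝ) ^ 2 * (2 ^ N * (N * 2 ^ N)) := by gcongr; exact hcs.trans (by gcongr)
    _ = (N : ℝ) := by field_simp

end RandomAccessCode

/-- Every parity-oblivious quantum random access code of `n ≥ 2` bits into
`d × d` density matrices, together with any decoding strategy, has worst-case bias at
most `1/√n`. -/
theorem parity_oblivious_qrac_worst_case_bias_le
    (n d : ℕ) (hn : 2 ≤ n)
    (ρ : (Fin n → ZMod 2) → Matrix (Fin d) (Fin d) ℂ)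
    (hpsd : ∀ x, (ρ x).PosSemidef)
    (htr : ∀ x, (ρ x).trace = 1)
    (hpo : ∀ S : Finset (Fin n), 2 ≤ S.card →
      ∑ x ∈ Finset.univ.filter (fun x : Fin n → ZMod 2 => ∑ i ∈ S, x i = 0), ρ x =
      ∑ x ∈ Finset.univ.filter (fun x : Fin n → ZMod 2 => ∑ i ∈ S, x i = 1), ρ x)
    (M : Fin n → Matrix (Fin d) (Fin d) ℂ)
    (hpos : ∀ t, (M t).PosSemidef)
    (hle1 : ∀ t, ((1 : Matrix (Fin d) (Fin d) ℂ) - M t).PosSemidef)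
    (p : Fin n → ℝ)
    (hp : ∀ t, p t = (1 / 2 ^ n : ℝ) * ∑ x : Fin n → ZMod 2,
      (if x t = 0 then ((ρ x * M t).trace).re
       else ((ρ x * (1 - M t)).trace).re)) :
    Finset.univ.inf' (Finset.univ_nonempty_iff.mpr ⟨⟨0, by omega⟩⟩)
      (fun t => 2 * p t - 1) ≤ 1 / Real.sqrt n := by
  have hp_eq : p = successProb ρ M := funext fun t => by
    rw [hp t, successProb, Fintype.card_fin]
  have hsq := sq_sum_two_mul_successProb_sub_one_le hpsd htr hpo hpos hle1
  rw [← hp_eq, Fintype.card_fin] at hsq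
  set ε := Finset.univ.inf' _ (fun t => 2 * p t - 1)
  have hmean : n * ε ≤ ∑ t, (2 * p t - 1) := by
    simpa using card_nsmul_le_sum univ _ ε fun t _ => inf'_le _ (mem_univ t)
  have hsum_le := (le_abs_self _).trans (Real.abs_le_sqrt hsq)
  have hn0 : (0 : ℝ) < n := by exact_mod_cast (show 0 < n by omega)
  rw [← Real.sqrt_div_self', le_div_iff₀ hn0]
  linarith
end

section
/- For every integer n ≥ 2, setting d = 2^⌊n/2⌋, there exist d×d density matrices ρ_x (x ∈ {0,1}^n) and Hermitian matrices M_t (t ∈ {1,…,n}) with 0 ⪯ M_t ⪯ I such that (i) for every S ⊆ {1,…,n} with |S| ≥ 2, Σ_{x : x_S = 0} ρ_x = Σ_{x : x_S = 1} ρ_x (parity-obliviousness), and (ii) for every x ∈ {0,1}^n and every t, Re tr(ρ_x M_t) = (1/2)(1 + (−1)^{x_t}/√n); in particular every bit x_t is decoded correctly with probability exactly (1/2)(1 + 1/√n), so the RAC has worst-case bias 1/√n on ⌊n/2⌋ qubits. -/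
/-!
Let `A₁, …, Aₙ` be pairwise anticommuting Hermitian involutions on `ℂ^d`, `d = 2^⌊n/2⌋`; they
exist by the Jordan–Wigner construction, where each new qubit turns the family `A` into `A ⊗ X`
together with `1 ⊗ Y` and `1 ⊗ Z`. Encode `x` as `ρₓ = (1 + n^{-1/2} ∑ₜ (-1)^{xₜ} Aₜ) / d` and
decode bit `t` with `(1 + Aₜ) / 2`. Anticommutation gives `(∑ₜ ± Aₜ)² = n`, so
`n^{-1/2} ∑ₜ ± Aₜ` is a Hermitian involution and `ρₓ ⪰ 0`; it also gives `tr (Aₛ Aₜ) = d δₛₜ`,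
whence the success probability `(1 + (-1)^{xₜ} / √n) / 2`. Finally `ρₓ` is affine in the signs
`(-1)^{xₜ}`, so every parity of at least two bits averages out.
-/

open Matrix BigOperators Finset
open scoped ComplexOrder Kronecker

structure IsCliffordFamily {ι α : Type*} [Ring α] (A : ι → α) : Prop where
  mul_self : ∀ i, A i * A i = 1
  anticomm : ∀ i j, i ≠ j → A i * A j = -(A j * A i)

namespace IsCliffordFamily

variable {ι α : Type*} [Ring α] {A : ι → α}

theorem comp (hA : IsCliffordFamily A) {κ : Type*} {f : κ → ι} (hf : f.Injective) :
    IsCliffordFamily (A ∘ f) :=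
  ⟨fun i => hA.mul_self (f i), fun _ _ hij => hA.anticomm _ _ (hf.ne hij)⟩

theorem map (hA : IsCliffordFamily A) {β F : Type*} [Ring β] [FunLike F α β]
    [RingHomClass F α β] (φ : F) : IsCliffordFamily (φ ∘ A) :=
  ⟨fun i => by simp [← map_mul, hA.mul_self], fun i j hij => by
    simp [← map_mul, hA.anticomm i j hij]⟩

theorem cons {N : ℕ} {A : Fin N → α} (hA : IsCliffordFamily A) {B : α} (hB : B * B = 1)
    (hBA : ∀ i, B * A i = -(A i * B)) : IsCliffordFamily (Fin.cons B A : Fin (N + 1) → α) := by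
  refine ⟨Fin.cases hB hA.mul_self, Fin.cases (Fin.cases (absurd rfl) fun j _ => hBA j)
    fun i => Fin.cases (fun _ => ?_) fun j hij => hA.anticomm i j fun h => hij (h ▸ rfl)⟩
  simp [hBA i]

theorem sum_smul_mul_self [Fintype ι] {R : Type*} [CommRing R] [Algebra R α]
    (hA : IsCliffordFamily A) (c : ι → R) :
    (∑ i, c i • A i) * (∑ i, c i • A i) = (∑ i, c i ^ 2) • (1 : α) := by
  classical
  have hdiag : ∀ i, (c i * c i) • (A i * A i) = (c i ^ 2) • (1 : α) := fun i => by
    rw [hA.mul_self, sq]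
  -- the off-diagonal terms cancel in pairs under `Prod.swap`
  set F : ι × ι → α := fun p =>
    (c p.1 * c p.2) • (A p.1 * A p.2) - if p.1 = p.2 then (c p.1 ^ 2) • (1 : α) else 0
  have hF : ∑ p, F p = 0 := by
    refine Finset.sum_ninvolution Prod.swap (fun ⟨i, j⟩ => ?_) (fun ⟨i, j⟩ hF hij => ?_)
      (fun _ => Finset.mem_univ _) Prod.swap_swap
    · by_cases hij : i = j
      · subst hij; simp [F, hdiag]
      · simp [F, hij, Ne.symm hij, hA.anticomm i j hij, mul_comm (c i)]
    · obtain rfl : i = j := (Prod.ext_iff.1 hij).1.symm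
      simp [F, hdiag] at hF
  calc (∑ i, c i • A i) * (∑ i, c i • A i)
      = ∑ p : ι × ι, (c p.1 * c p.2) • (A p.1 * A p.2) := by
        simp only [Finset.sum_mul_sum, smul_mul_smul_comm, ← Fintype.sum_prod_type']
    _ = ∑ p, F p + ∑ p : ι × ι, if p.1 = p.2 then (c p.1 ^ 2) • (1 : α) else 0 := by
        simp only [F, ← Finset.sum_add_distrib, sub_add_cancel]
    _ = (∑ i, c i ^ 2) • (1 : α) := by
        simp [hF, Fintype.sum_prod_type, Finset.sum_smul]

section Trace

variable {d R : Type*} [Fintype d] [DecidableEq d] [CommRing R] {A : ι → Matrix d d R}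

theorem trace_mul_eq_zero [IsAddTorsionFree R] (hA : IsCliffordFamily A) {i j : ι} (hij : i ≠ j) :
    (A i * A j).trace = 0 := by
  rw [← self_eq_neg]
  nth_rw 1 [hA.anticomm i j hij]
  rw [trace_neg, trace_mul_comm]

-- `A j = -(A i * A j * A i)` for any `i ≠ j`, and the trace is invariant under cyclic permutation
theorem trace_eq_zero [Nontrivial ι] [IsAddTorsionFree R] (hA : IsCliffordFamily A) (j : ι) :
    (A j).trace = 0 := by
  obtain ⟨i, hij⟩ := exists_ne j
  have hconj : A i * A j * A i = -A j := by
    rw [hA.anticomm i j hij, neg_mul, mul_assoc, hA.mul_self, mul_one]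
  rw [← self_eq_neg, ← trace_neg, ← hconj, trace_mul_cycle, hA.mul_self, one_mul]

theorem trace_sum_smul_mul [Fintype ι] [IsAddTorsionFree R] {S : Type*} [Monoid S]
    [DistribMulAction S R] [IsScalarTower S R R] (hA : IsCliffordFamily A) (c : ι → S) (j : ι) :
    ((∑ i, c i • A i) * A j).trace = c j • (Fintype.card d : R) := by
  classical
  rw [Finset.sum_mul, trace_sum, Finset.sum_eq_single j]
  · rw [smul_mul_assoc, trace_smul, hA.mul_self, trace_one]
  · intro i _ hij
    rw [smul_mul_assoc, trace_smul, hA.trace_mul_eq_zero hij, smul_zero]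
  · simp

end Trace

end IsCliffordFamily

namespace Matrix

variable {l m n p α : Type*}

theorem neg_kronecker [Mul α] [HasDistribNeg α] (A : Matrix l m α) (B : Matrix n p α) :
    (-A) ⊗ₖ B = -(A ⊗ₖ B) := by
  ext; simp

theorem kronecker_neg [Mul α] [HasDistribNeg α] (A : Matrix l m α) (B : Matrix n p α) :
    A ⊗ₖ (-B) = -(A ⊗ₖ B) := by
  ext; simp

theorem IsHermitian.kronecker [CommMagma α] [StarMul α] {A : Matrix m m α} {B : Matrix n n α}
    (hA : A.IsHermitian) (hB : B.IsHermitian) : (A ⊗ₖ B).IsHermitian := by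
  rw [IsHermitian, conjTranspose_kronecker, hA.eq, hB.eq]

theorem one_kronecker_mul_kronecker_of_anticomm [CommRing α] [Fintype m] [DecidableEq m]
    [Fintype n] {B : Matrix m m α} {P Q : Matrix n n α} (hQP : Q * P = -(P * Q)) :
    (1 ⊗ₖ Q) * (B ⊗ₖ P) = -((B ⊗ₖ P) * (1 ⊗ₖ Q)) := by
  rw [← mul_kronecker_mul, ← mul_kronecker_mul, one_mul, mul_one, hQP, kronecker_neg]

theorem IsHermitian.posSemidef_one_add [Fintype n] [DecidableEq n] {P : Matrix n n ℂ}
    (hP : P.IsHermitian) (hP2 : P * P = 1) : (1 + P).PosSemidef := by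
  have hsq : 1 + P = (2 : ℝ)⁻¹ • ((1 + P)ᴴ * (1 + P)) := by
    simp only [conjTranspose_add, conjTranspose_one, hP.eq, add_mul, mul_add, one_mul, mul_one, hP2]
    module
  rw [hsq]
  exact (posSemidef_conjTranspose_mul_self _).smul (by norm_num)

def pauliX : Matrix (Fin 2) (Fin 2) ℂ := !![0, 1; 1, 0]

def pauliY : Matrix (Fin 2) (Fin 2) ℂ := !![0, -Complex.I; Complex.I, 0]

def pauliZ : Matrix (Fin 2) (Fin 2) ℂ := !![1, 0; 0, -1]

theorem isCliffordFamily_pauli : IsCliffordFamily ![pauliX, pauliY, pauliZ] := by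
  refine ⟨fun i => ?_, fun i j hij => ?_⟩ <;>
  · fin_cases i <;> (try fin_cases j) <;> (try simp at hij) <;>
    · ext a b
      fin_cases a <;> fin_cases b <;> simp [pauliX, pauliY, pauliZ]

theorem isHermitian_pauli (i : Fin 3) : (![pauliX, pauliY, pauliZ] i).IsHermitian := by
  fin_cases i <;>
  · ext a b
    fin_cases a <;> fin_cases b <;> simp [pauliX, pauliY, pauliZ]

end Matrix

section CliffordExtension

variable {d : Type*} [DecidableEq d] {N : ℕ}

def cliffordExtension (A : Fin N → Matrix d d ℂ) :
    Fin (N + 2) → Matrix (d × Fin 2) (d × Fin 2) ℂ :=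
  Fin.cons (1 ⊗ₖ pauliZ) (Fin.cons (1 ⊗ₖ pauliY) fun i => A i ⊗ₖ pauliX)

theorem IsCliffordFamily.cliffordExtension [Fintype d] {A : Fin N → Matrix d d ℂ}
    (hA : IsCliffordFamily A) : IsCliffordFamily (cliffordExtension A) := by
  have hP := isCliffordFamily_pauli
  have hXX : pauliX * pauliX = 1 := hP.mul_self 0
  have hYY : pauliY * pauliY = 1 := hP.mul_self 1
  have hZZ : pauliZ * pauliZ = 1 := hP.mul_self 2
  have hYX : pauliY * pauliX = -(pauliX * pauliY) := hP.anticomm 1 0 (by decide)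
  have hZX : pauliZ * pauliX = -(pauliX * pauliZ) := hP.anticomm 2 0 (by decide)
  have hZY : pauliZ * pauliY = -(pauliY * pauliZ) := hP.anticomm 2 1 (by decide)
  have hAX : IsCliffordFamily fun i => A i ⊗ₖ pauliX :=
    ⟨fun i => by rw [← mul_kronecker_mul, hA.mul_self, hXX, one_kronecker_one],
      fun i j hij => by rw [← mul_kronecker_mul, ← mul_kronecker_mul, hA.anticomm i j hij,
        neg_kronecker]⟩
  refine (hAX.cons ?_ fun i => one_kronecker_mul_kronecker_of_anticomm hYX).cons ?_ ?_
  · rw [← mul_kronecker_mul, one_mul, hYY, one_kronecker_one]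
  · rw [← mul_kronecker_mul, one_mul, hZZ, one_kronecker_one]
  · refine Fin.cases ?_ fun i => one_kronecker_mul_kronecker_of_anticomm hZX
    simpa using one_kronecker_mul_kronecker_of_anticomm (B := (1 : Matrix d d ℂ)) hZY

theorem isHermitian_cliffordExtension {A : Fin N → Matrix d d ℂ} (hA : ∀ i, (A i).IsHermitian) :
    ∀ i, (cliffordExtension A i).IsHermitian :=
  Fin.cases (isHermitian_one.kronecker (isHermitian_pauli 2))
    (Fin.cases (isHermitian_one.kronecker (isHermitian_pauli 1))
      fun i => (hA i).kronecker (isHermitian_pauli 0))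

end CliffordExtension

theorem exists_isCliffordFamily_isHermitian (m : ℕ) :
    ∃ A : Fin (2 * m + 1) → Matrix (Fin (2 ^ m)) (Fin (2 ^ m)) ℂ,
      IsCliffordFamily A ∧ ∀ i, (A i).IsHermitian := by
  induction m with
  | zero =>
    exact ⟨fun _ => 1, ⟨fun _ => mul_one 1, fun i j hij => (hij (Fin.ext (by omega))).elim⟩,
      fun _ => isHermitian_one⟩
  | succ m ih =>
    obtain ⟨A, hA, hAh⟩ := ih
    let e : Fin (2 ^ m) × Fin 2 ≃ Fin (2 ^ (m + 1)) :=
      finProdFinEquiv.trans (finCongr (pow_succ 2 m).symm)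
    exact ⟨reindexRingEquiv ℂ e ∘ cliffordExtension A, hA.cliffordExtension.map _,
      fun i => (isHermitian_cliffordExtension hAh i).submatrix _⟩

noncomputable def signChar : AddChar (ZMod 2) ℝ :=
  AddChar.zmodChar 2 (by norm_num : (-1 : ℝ) ^ 2 = 1)

theorem signChar_apply (c : ZMod 2) : signChar c = if c = 0 then 1 else -1 := by
  rw [signChar, AddChar.zmodChar_apply]
  rcases (by decide : ∀ c : ZMod 2, c = 0 ∨ c = 1) c with rfl | rfl <;> simp [ZMod.val_one]

theorem signChar_sq (c : ZMod 2) : signChar c ^ 2 = 1 := by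
  rw [signChar_apply]; split_ifs <;> norm_num

theorem sum_signChar_eq_zero {G : Type*} [AddGroup G] [Fintype G] (f : G →+ ZMod 2) {y : G}
    (hy : f y = 1) : ∑ x, signChar (f x) = 0 :=
  AddChar.sum_eq_zero_of_ne_one (ψ := signChar.compAddMonoidHom f)
    (AddChar.ne_one_iff.2 ⟨y, by norm_num [hy, signChar_apply]⟩)

theorem sum_signChar_smul {G M : Type*} [Fintype G] [AddCommGroup M] [Module ℝ M]
    (l : G → ZMod 2) (f : G → M) :
    ∑ x, signChar (l x) • f x =
      ∑ x ∈ univ.filter (l · = 0), f x - ∑ x ∈ univ.filter (l · = 1), f x := by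
  have hne : ∀ c : ZMod 2, ¬c = 0 ↔ c = 1 := by decide
  rw [← Finset.sum_filter_add_sum_filter_not univ (l · = 0), sub_eq_add_neg, ← sum_neg_distrib]
  congr 1
  · exact sum_congr rfl fun x hx => by simp [(mem_filter.1 hx).2]
  · refine sum_congr (filter_congr fun x _ => hne _) fun x hx => ?_
    simp [(mem_filter.1 hx).2, signChar_apply]

def parityHom {ι : Type*} (S : Finset ι) : (ι → ZMod 2) →+ ZMod 2 :=
  AddMonoidHom.mk' (fun x => ∑ i ∈ S, x i) fun _ _ => sum_add_distrib

section CliffordDecoder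

variable {ι d : Type*} [DecidableEq d] {A : ι → Matrix d d ℂ}

noncomputable def cliffordDecoder (A : ι → Matrix d d ℂ) (t : ι) : Matrix d d ℂ :=
  (2 : ℝ)⁻¹ • (1 + A t)

theorem isHermitian_cliffordDecoder (hAh : ∀ t, (A t).IsHermitian) (t : ι) :
    (cliffordDecoder A t).IsHermitian :=
  (isHermitian_one.add (hAh t)).smul (IsSelfAdjoint.all _)

theorem posSemidef_cliffordDecoder [Fintype d] (hA : IsCliffordFamily A)
    (hAh : ∀ t, (A t).IsHermitian) (t : ι) : (cliffordDecoder A t).PosSemidef :=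
  ((hAh t).posSemidef_one_add (hA.mul_self t)).smul (by norm_num)

theorem posSemidef_one_sub_cliffordDecoder [Fintype d] (hA : IsCliffordFamily A)
    (hAh : ∀ t, (A t).IsHermitian) (t : ι) : (1 - cliffordDecoder A t).PosSemidef := by
  have h : 1 - cliffordDecoder A t = (2 : ℝ)⁻¹ • (1 + -A t) := by
    rw [cliffordDecoder]; module
  rw [h]
  exact ((hAh t).neg.posSemidef_one_add (by rw [neg_mul_neg, hA.mul_self])).smul (by norm_num)

end CliffordDecoder

section CliffordCode

variable {ι d : Type*} [Fintype ι] [Fintype d] [DecidableEq d] {A : ι → Matrix d d ℂ}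

noncomputable def cliffordState (A : ι → Matrix d d ℂ) (x : ι → ZMod 2) : Matrix d d ℂ :=
  (Fintype.card d : ℝ)⁻¹ • (1 + (√(Fintype.card ι))⁻¹ • ∑ t, signChar (x t) • A t)

theorem posSemidef_cliffordState [Nonempty ι] (hA : IsCliffordFamily A)
    (hAh : ∀ t, (A t).IsHermitian) (x : ι → ZMod 2) : (cliffordState A x).PosSemidef := by
  have hn : (0 : ℝ) < Fintype.card ι := by exact_mod_cast Fintype.card_pos
  set P := (√(Fintype.card ι))⁻¹ • ∑ t, signChar (x t) • A t
  have hPh : P.IsHermitian :=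
    (IsSelfAdjoint.all _).smul (isSelfAdjoint_sum _ fun t _ => (IsSelfAdjoint.all _).smul (hAh t))
  have hP2 : P * P = 1 := by
    rw [smul_mul_smul_comm, hA.sum_smul_mul_self, smul_smul]
    simp [signChar_sq, ← sq, Real.sq_sqrt hn.le, hn.ne']
  exact (hPh.posSemidef_one_add hP2).smul (by positivity)

theorem trace_cliffordState [Nontrivial ι] [Nonempty d] (hA : IsCliffordFamily A)
    (x : ι → ZMod 2) : (cliffordState A x).trace = 1 := by
  simp [cliffordState, trace_sum, hA.trace_eq_zero]

theorem sum_filter_cliffordState_eq [DecidableEq ι] (A : ι → Matrix d d ℂ) {S : Finset ι}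
    (hS : 2 ≤ S.card) :
    ∑ x ∈ univ.filter (fun x : ι → ZMod 2 => ∑ i ∈ S, x i = 0), cliffordState A x =
      ∑ x ∈ univ.filter (fun x : ι → ZMod 2 => ∑ i ∈ S, x i = 1), cliffordState A x := by
  rw [← sub_eq_zero, ← sum_signChar_smul (fun x : ι → ZMod 2 => ∑ i ∈ S, x i)]
  obtain ⟨i, hi⟩ : S.Nonempty := card_pos.1 (by omega)
  have hS0 : ∑ x : ι → ZMod 2, signChar (∑ i ∈ S, x i) = 0 :=
    sum_signChar_eq_zero (parityHom S) (y := Pi.single i 1) (by simp [parityHom, hi])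
  have hSt : ∀ t, ∑ x : ι → ZMod 2, signChar (∑ i ∈ S, x i) * signChar (x t) = 0 := by
    intro t
    obtain ⟨j, hj, hjt⟩ := (one_lt_card_iff_nontrivial.1 (by omega : 1 < S.card)).exists_ne t
    simp_rw [← AddChar.map_add_eq_mul]
    exact sum_signChar_eq_zero (parityHom S + Pi.evalAddMonoidHom _ t) (y := Pi.single j 1)
      (by simp [parityHom, hj, hjt])
  calc ∑ x, signChar (∑ i ∈ S, x i) • cliffordState A x
      = (Fintype.card d : ℝ)⁻¹ • ((∑ x : ι → ZMod 2, signChar (∑ i ∈ S, x i)) • 1 +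
          (√(Fintype.card ι))⁻¹ •
            ∑ t, (∑ x : ι → ZMod 2, signChar (∑ i ∈ S, x i) * signChar (x t)) • A t) := by
        simp only [cliffordState, smul_add, Finset.smul_sum, Finset.sum_smul, smul_smul,
          Finset.sum_add_distrib]
        rw [Finset.sum_comm (s := univ) (t := univ)]
        congr 1 <;> refine sum_congr rfl fun _ _ => ?_
        · ring_nf
        · refine sum_congr rfl fun _ _ => ?_
          ring_nf
    _ = 0 := by simp [hS0, hSt]

theorem re_trace_cliffordState_mul_cliffordDecoder [Nontrivial ι] [Nonempty d]
    (hA : IsCliffordFamily A) (x : ι → ZMod 2) (t : ι) :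
    (cliffordState A x * cliffordDecoder A t).trace.re =
      1 / 2 * (1 + signChar (x t) / √(Fintype.card ι)) := by
  have hmul : cliffordState A x * cliffordDecoder A t = ((Fintype.card d : ℝ)⁻¹ * 2⁻¹) •
      (1 + A t + (√(Fintype.card ι))⁻¹ • (∑ s, signChar (x s) • A s) +
        (√(Fintype.card ι))⁻¹ • ((∑ s, signChar (x s) • A s) * A t)) := by
    simp only [cliffordState, cliffordDecoder, smul_mul_assoc, mul_smul_comm, add_mul, mul_add,
      one_mul, mul_one, smul_add, smul_smul]
    module
  rw [hmul, trace_smul, trace_add, trace_add, trace_add, trace_smul, trace_smul,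
    hA.trace_sum_smul_mul, trace_sum]
  simp [hA.trace_eq_zero]
  field_simp
  linear_combination signChar (x t) * Real.mul_self_sqrt (Nat.cast_nonneg (Fintype.card ι))

end CliffordCode

/-- For every `n ≥ 2` there is a parity-oblivious quantum random access code
of `n` bits on `⌊n/2⌋` qubits (dimension `2^⌊n/2⌋`), together with a decoding strategy,
in which every bit is decoded with probability exactly `(1/2)(1 + 1/√n)`; in particular
the worst-case bias is `1/√n`. -/
theorem exists_optimal_parity_oblivious_qrac (n : ℕ) (hn : 2 ≤ n) :
    ∃ (ρ : (Fin n → ZMod 2) → Matrix (Fin (2 ^ (n / 2))) (Fin (2 ^ (n / 2))) ℂ)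
      (M : Fin n → Matrix (Fin (2 ^ (n / 2))) (Fin (2 ^ (n / 2))) ℂ),
      (∀ x, (ρ x).PosSemidef) ∧
      (∀ x, (ρ x).trace = 1) ∧
      (∀ t, (M t).IsHermitian) ∧
      (∀ t, (M t).PosSemidef) ∧
      (∀ t, ((1 : Matrix (Fin (2 ^ (n / 2))) (Fin (2 ^ (n / 2))) ℂ) - M t).PosSemidef) ∧
      (∀ S : Finset (Fin n), 2 ≤ S.card →
        ∑ x ∈ Finset.univ.filter (fun x : Fin n → ZMod 2 => ∑ i ∈ S, x i = 0), ρ x =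
        ∑ x ∈ Finset.univ.filter (fun x : Fin n → ZMod 2 => ∑ i ∈ S, x i = 1), ρ x) ∧
      (∀ (x : Fin n → ZMod 2) (t : Fin n),
        ((ρ x * M t).trace).re =
          (1 / 2) * (1 + (if x t = 0 then (1 : ℝ) else -1) / Real.sqrt n)) := by
  obtain ⟨A, hA, hAh⟩ := exists_isCliffordFamily_isHermitian (n / 2)
  have : Nontrivial (Fin n) := Fin.nontrivial_iff_two_le.2 hn
  set B := A ∘ Fin.castLE (by omega : n ≤ 2 * (n / 2) + 1)
  have hB : IsCliffordFamily B := hA.comp (Fin.castLE_injective _)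
  have hBh : ∀ t, (B t).IsHermitian := fun t => hAh _
  refine ⟨cliffordState B, cliffordDecoder B, posSemidef_cliffordState hB hBh,
    trace_cliffordState hB, isHermitian_cliffordDecoder hBh, posSemidef_cliffordDecoder hB hBh,
    posSemidef_one_sub_cliffordDecoder hB hBh, fun S hS => sum_filter_cliffordState_eq B hS,
    fun x t => ?_⟩
  rw [re_trace_cliffordState_mul_cliffordDecoder hB, signChar_apply, Fintype.card_fin]
end

section
/- For every n ≥ 1, every real inner product space V, and all families of unit vectors u_s ∈ V (s ∈ {0,1}^n) and v_t ∈ V (t ∈ {1,…,n}), one has (1/(n·2^n)) Σ_{s ∈ {0,1}^n} Σ_{t=1}^n (−1)^{s_t} ⟨u_s, v_t⟩ ≤ 1/√n. -/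
open BigOperators Finset
open scoped RealInnerProductSpace

/-!
Write `ε s i = ±1` for the sign of the bit `s i`. For fixed `s` the inner sum is
`⟪u s, w s⟫` with `w s = ∑ i, ε s i • v i`, hence at most `‖w s‖`. The signs `ε · i` are
orthogonal as functions of a uniformly random `s`, so `∑ s, ‖w s‖ ^ 2 = 2 ^ n * n`, and
Cauchy–Schwarz over `s` gives `∑ s, ‖w s‖ ≤ 2 ^ n * √n`.
-/

def zmodTwoSign (a : ZMod 2) : ℝ := if a = 0 then 1 else -1

lemma zmodTwoSign_add_one (a : ZMod 2) : zmodTwoSign (a + 1) = -zmodTwoSign a := by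
  unfold zmodTwoSign
  rcases (by decide : ∀ b : ZMod 2, b = 0 ∨ b = 1) a with rfl | rfl <;>
    simp [show (1 + 1 : ZMod 2) = 0 from rfl]

lemma zmodTwoSign_mul_self (a : ZMod 2) : zmodTwoSign a * zmodTwoSign a = 1 := by
  unfold zmodTwoSign; split_ifs <;> norm_num

section

variable {ι : Type*} [Fintype ι] [DecidableEq ι]

lemma sum_zmodTwoSign_mul_of_ne {i j : ι} (hij : i ≠ j) :
    ∑ s : ι → ZMod 2, zmodTwoSign (s i) * zmodTwoSign (s j) = 0 := by
  set f : (ι → ZMod 2) → ℝ := fun s => zmodTwoSign (s i) * zmodTwoSign (s j)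
  -- flipping the bit `i` is a bijection that negates `f`
  have hflip : ∀ s, f (s + Pi.single i 1) = -f s := fun s => by
    simp [f, hij.symm, zmodTwoSign_add_one]
  have hsum := Equiv.sum_comp (Equiv.addRight (Pi.single i 1 : ι → ZMod 2)) f
  simp only [Equiv.coe_addRight, hflip, sum_neg_distrib] at hsum
  linarith

lemma sum_zmodTwoSign_mul (i j : ι) :
    ∑ s : ι → ZMod 2, zmodTwoSign (s i) * zmodTwoSign (s j) =
      if i = j then 2 ^ Fintype.card ι else 0 := by
  split_ifs with hij
  · subst hij
    simp [zmodTwoSign_mul_self]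
  · exact sum_zmodTwoSign_mul_of_ne hij

variable {V : Type*} [NormedAddCommGroup V] [InnerProductSpace ℝ V]

theorem sum_norm_sq_sum_zmodTwoSign_smul (v : ι → V) :
    ∑ s : ι → ZMod 2, ‖∑ i, zmodTwoSign (s i) • v i‖ ^ 2 =
      2 ^ Fintype.card ι * ∑ i, ‖v i‖ ^ 2 := by
  simp_rw [← real_inner_self_eq_norm_sq, sum_inner, inner_sum, real_inner_smul_left,
    real_inner_smul_right, ← mul_assoc]
  rw [sum_comm]
  simp_rw [sum_comm (s := (univ : Finset (ι → ZMod 2))), ← sum_mul, sum_zmodTwoSign_mul,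
    ite_mul, zero_mul, sum_ite_eq, if_pos (mem_univ _), mul_sum]

theorem sum_norm_sum_zmodTwoSign_smul_le (v : ι → V) (hv : ∀ i, ‖v i‖ ≤ 1) :
    ∑ s : ι → ZMod 2, ‖∑ i, zmodTwoSign (s i) • v i‖ ≤
      2 ^ Fintype.card ι * √(Fintype.card ι) := by
  set N := Fintype.card ι
  have hsq : ∑ i, ‖v i‖ ^ 2 ≤ N := by
    simpa using sum_le_sum fun i (_ : i ∈ univ) =>
      pow_le_one₀ (n := 2) (norm_nonneg (v i)) (hv i)
  have hcs := sq_sum_le_card_mul_sum_sq (s := (univ : Finset (ι → ZMod 2)))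
    (f := fun s => ‖∑ i, zmodTwoSign (s i) • v i‖)
  rw [sum_norm_sq_sum_zmodTwoSign_smul, card_univ, Fintype.card_fun, ZMod.card] at hcs
  calc _ ≤ √(2 ^ N * (2 ^ N * N)) := by
        refine (le_abs_self _).trans (Real.abs_le_sqrt (hcs.trans ?_))
        push_cast
        gcongr
    _ = 2 ^ N * √N := by
        rw [← mul_assoc, Real.sqrt_mul (by positivity), Real.sqrt_mul_self (by positivity)]

theorem sum_sum_zmodTwoSign_mul_inner_le (u : (ι → ZMod 2) → V) (v : ι → V)
    (hu : ∀ s, ‖u s‖ ≤ 1) (hv : ∀ i, ‖v i‖ ≤ 1) :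
    ∑ s : ι → ZMod 2, ∑ i, zmodTwoSign (s i) * ⟪u s, v i⟫ ≤
      2 ^ Fintype.card ι * √(Fintype.card ι) :=
  calc ∑ s : ι → ZMod 2, ∑ i, zmodTwoSign (s i) * ⟪u s, v i⟫
      = ∑ s : ι → ZMod 2, ⟪u s, ∑ i, zmodTwoSign (s i) • v i⟫ := by
        simp_rw [inner_sum, real_inner_smul_right]
    _ ≤ ∑ s : ι → ZMod 2, ‖∑ i, zmodTwoSign (s i) • v i‖ := sum_le_sum fun s _ =>
        (real_inner_le_norm _ _).trans (mul_le_of_le_one_left (norm_nonneg _) (hu s))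
    _ ≤ _ := sum_norm_sum_zmodTwoSign_smul_le v hv

end

theorem index_game_vector_bias_le_general
    (n : ℕ) (V : Type*) [NormedAddCommGroup V] [InnerProductSpace ℝ V]
    (u : (Fin n → ZMod 2) → V) (v : Fin n → V)
    (hu : ∀ s, ‖u s‖ = 1) (hv : ∀ t, ‖v t‖ = 1) :
    (1 / (n * 2 ^ n) : ℝ) * ∑ s : Fin n → ZMod 2, ∑ t : Fin n,
      (if s t = 0 then (1 : ℝ) else -1) * ⟪u s, v t⟫
      ≤ 1 / Real.sqrt n := by
  have hbias := sum_sum_zmodTwoSign_mul_inner_le u v (fun s => (hu s).le) (fun t => (hv t).le)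
  rw [Fintype.card_fin] at hbias
  calc _ ≤ (1 / (n * 2 ^ n) : ℝ) * (2 ^ n * √n) :=
        mul_le_mul_of_nonneg_left hbias (by positivity)
    _ = √n / n := by field_simp
    _ = 1 / √n := Real.sqrt_div_self'

/-- The vector (SDP) relaxation of the INDEX game: for any families of unit
vectors `u s` and `v t` in a real inner product space, the bias expression is at most
`1/√n`. -/
theorem index_game_vector_bias_le
    (n : ℕ) (hn : 1 ≤ n) (V : Type*) [NormedAddCommGroup V] [InnerProductSpace ℝ V]
    (u : (Fin n → ZMod 2) → V) (v : Fin n → V)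
    (hu : ∀ s, ‖u s‖ = 1) (hv : ∀ t, ‖v t‖ = 1) :
    (1 / (n * 2 ^ n) : ℝ) * ∑ s : Fin n → ZMod 2, ∑ t : Fin n,
      (if s t = 0 then (1 : ℝ) else -1) * ⟪u s, v t⟫
      ≤ 1 / Real.sqrt n :=
  index_game_vector_bias_le_general n V u v hu hv
end

section
/- For every n ≥ 1, let A be the real matrix with rows indexed by s ∈ {0,1}^n and columns by t ∈ {1,…,n} given by A_{s,t} = (−1)^{s_t}/(n·2^n), and let u := 1/(2√n·2^n) and v := 1/(2n√n). Then the symmetric block matrix [[u·I_{2^n}, −A/2], [−Aᵀ/2, v·I_n]] (indexed by the disjoint union {0,1}^n ⊔ {1,…,n}) is positive semidefinite. -/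
/-!
The Schur complement of the block `u • 1` is `v • 1 - u⁻¹ • AᵀA / 4`. The columns of the `±1`
sign matrix of `{0,1}ⁿ` are the characters `s ↦ (-1)^{s_t}`, which are orthogonal, so
`AᵀA = (n² 2ⁿ)⁻¹ • 1`; the values of `u` and `v` make the Schur complement exactly zero.
-/

open Matrix Finset

theorem Matrix.posSemidef_fromBlocks_smul_one {m n : Type*} [Fintype m] [Fintype n]
    [DecidableEq m] [DecidableEq n] {u v : ℝ} (hu : 0 < u) (B : Matrix m n ℝ)
    (hB : ((u * v) • (1 : Matrix n n ℝ) - Bᵀ * B).PosSemidef) :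
    (fromBlocks (u • 1) B Bᵀ (v • 1)).PosSemidef := by
  have : Invertible (u • (1 : Matrix m m ℝ)) :=
    invertibleOfLeftInverse _ (u⁻¹ • 1) (by simp [smul_smul, hu.ne'])
  have hinv : (u • (1 : Matrix m m ℝ))⁻¹ = u⁻¹ • 1 :=
    inv_eq_left_inv (by simp [smul_smul, hu.ne'])
  have hschur : v • (1 : Matrix n n ℝ) - Bᵀ * (u⁻¹ • (1 : Matrix m m ℝ)) * B =
      u⁻¹ • ((u * v) • (1 : Matrix n n ℝ) - Bᵀ * B) := by
    rw [smul_sub, smul_smul, inv_mul_cancel_left₀ hu.ne']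
    simp
  rw [← conjTranspose_eq_transpose_of_trivial, PosDef.fromBlocks₁₁ B _ (PosDef.one.smul hu), hinv,
    conjTranspose_eq_transpose_of_trivial, hschur]
  exact hB.smul (inv_nonneg.mpr hu.le)

def signMatrix (ι : Type*) : Matrix (ι → ZMod 2) ι ℝ := fun s t => if s t = 0 then 1 else -1

section signMatrix

variable {ι : Type*}

theorem signMatrix_mul_self (s : ι → ZMod 2) (t : ι) :
    signMatrix ι s t * signMatrix ι s t = 1 := by
  unfold signMatrix; split_ifs <;> norm_num

variable [DecidableEq ι]

theorem signMatrix_add_single_self (s : ι → ZMod 2) (t : ι) :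
    signMatrix ι (s + Pi.single t 1) t = -signMatrix ι s t := by
  simp only [signMatrix, Pi.add_apply, Pi.single_eq_same]
  obtain h | h : s t = 0 ∨ s t = 1 := by generalize s t = a; revert a; decide
  all_goals simp +decide [h]

theorem signMatrix_add_single_of_ne (s : ι → ZMod 2) {t t' : ι} (h : t' ≠ t) :
    signMatrix ι (s + Pi.single t 1) t' = signMatrix ι s t' := by
  simp [signMatrix, Pi.single_eq_of_ne h]

theorem signMatrix_transpose_mul_self [Fintype ι] :
    (signMatrix ι)ᵀ * signMatrix ι = (2 ^ Fintype.card ι : ℝ) • 1 := by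
  ext t t'
  simp only [mul_apply, transpose_apply, Matrix.smul_apply, one_apply, smul_eq_mul]
  split_ifs with h
  · subst h
    simp [signMatrix_mul_self]
  · -- translating `s` by the indicator of `t` flips the sign of every summand
    have hflip := Fintype.sum_equiv (Equiv.addRight (Pi.single t 1))
      (fun s => signMatrix ι (s + Pi.single t 1) t * signMatrix ι (s + Pi.single t 1) t')
      (fun s => signMatrix ι s t * signMatrix ι s t') fun s => rfl
    simp only [signMatrix_add_single_self, signMatrix_add_single_of_ne _ (Ne.symm h), neg_mul,
      sum_neg_distrib] at hflip
    linarith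

end signMatrix

/-- The dual-feasible solution of the SDP for the INDEX game: with
`A_{s,t} = (−1)^{s_t}/(n·2^n)`, `u = 1/(2√n·2^n)` and `v = 1/(2n√n)`, the block matrix
`[[u·I, −A/2], [−Aᵀ/2, v·I]]` is positive semidefinite. -/
theorem index_game_dual_feasible (n : ℕ) (hn : 1 ≤ n) :
    (Matrix.fromBlocks
      ((1 / (2 * Real.sqrt n * 2 ^ n)) •
        (1 : Matrix (Fin n → ZMod 2) (Fin n → ZMod 2) ℝ))
      ((-(1 / 2) : ℝ) • (fun (s : Fin n → ZMod 2) (t : Fin n) =>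
        (if s t = 0 then (1 : ℝ) else -1) / (n * 2 ^ n)))
      ((-(1 / 2) : ℝ) • (fun (s : Fin n → ZMod 2) (t : Fin n) =>
        (if s t = 0 then (1 : ℝ) else -1) / (n * 2 ^ n))ᵀ)
      ((1 / (2 * n * Real.sqrt n)) • (1 : Matrix (Fin n) (Fin n) ℝ))).PosSemidef := by
  have hn' : (0 : ℝ) < n := by exact_mod_cast hn
  have hA : (fun (s : Fin n → ZMod 2) (t : Fin n) =>
      (if s t = 0 then (1 : ℝ) else -1) / (n * 2 ^ n)) = ((n : ℝ) * 2 ^ n)⁻¹ • signMatrix (Fin n) := by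
    ext s t
    simp [signMatrix, div_eq_inv_mul]
  have hB : ((-(1 / 2) : ℝ) • (fun (s : Fin n → ZMod 2) (t : Fin n) =>
        (if s t = 0 then (1 : ℝ) else -1) / (n * 2 ^ n)) : Matrix (Fin n → ZMod 2) (Fin n) ℝ) =
      (-(1 / 2) * ((n : ℝ) * 2 ^ n)⁻¹) • signMatrix (Fin n) := by
    rw [hA]
    exact smul_smul _ _ _
  have huv : 1 / (2 * Real.sqrt n * 2 ^ n) * (1 / (2 * n * Real.sqrt n)) =
      (-(1 / 2) * ((n : ℝ) * 2 ^ n)⁻¹) ^ 2 * 2 ^ n := by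
    field_simp
    rw [Real.sq_sqrt hn'.le]
  rw [hB, hA, ← transpose_smul, smul_smul]
  apply posSemidef_fromBlocks_smul_one (by positivity)
  rw [transpose_smul, Matrix.smul_mul, Matrix.mul_smul, signMatrix_transpose_mul_self,
    Fintype.card_fin, smul_smul, smul_smul, ← sq, huv, sub_self]
  exact PosSemidef.zero
end

section
/- For every n ≥ 1, the maximum over all deterministic classical strategies (a : {0,1}^n → {0,1}, b : {1,…,n} → {0,1}) of the bias of the INDEX^n game equals (2/n) · 2^{−n} · Σ_{s ∈ {0,1}^n} |n/2 − w(s)|, where w(s) is the Hamming weight of s. -/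
open BigOperators Finset

namespace IndexAux

lemma zmod2_cases (x : ZMod 2) : x = 0 ∨ x = 1 := by revert x; decide

lemma zmod2_one_add (x y : ZMod 2) : 1 + x = y ↔ ¬ x = y := by revert x y; decide

lemma zmod2_zero_iff (x : ZMod 2) : x = 0 ↔ ¬ x = 1 := by revert x; decide

variable {n : ℕ}

def w (s : Fin n → ZMod 2) : ℕ := (univ.filter (fun i => s i = 1)).card

lemma w_le (s : Fin n → ZMod 2) : w s ≤ n :=
  le_trans (card_filter_le _ _) (by simp)

lemma card_not (p : Fin n → Prop) [DecidablePred p] :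
    (univ.filter (fun t => ¬ p t)).card = n - (univ.filter p).card := by
  have := Finset.card_filter_add_card_filter_not (s := (univ : Finset (Fin n))) (p := p)
  simp at this
  omega

lemma card_prod (a : (Fin n → ZMod 2) → ZMod 2) (b : Fin n → ZMod 2) :
    (univ.filter (fun p : (Fin n → ZMod 2) × Fin n => a p.1 + b p.2 = p.1 p.2)).card
      = ∑ s : Fin n → ZMod 2, (univ.filter (fun t => a s + b t = s t)).card := by
  rw [Finset.card_filter, Fintype.sum_prod_type]
  exact Finset.sum_congr rfl fun s _ => (Finset.card_filter _ _).symm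

lemma fiber_le (a : (Fin n → ZMod 2) → ZMod 2) (b : Fin n → ZMod 2) (s : Fin n → ZMod 2) :
    (univ.filter (fun t => a s + b t = s t)).card
      ≤ max ((univ.filter (fun t => b t = s t)).card)
          (n - (univ.filter (fun t => b t = s t)).card) := by
  rcases zmod2_cases (a s) with h | h
  · simp only [h, zero_add]
    exact le_max_left _ _
  · simp only [h, zmod2_one_add]
    rw [card_not]
    exact le_max_right _ _

lemma sum_reindex (b : Fin n → ZMod 2) (g : ℕ → ℕ) :
    ∑ s : Fin n → ZMod 2, g ((univ.filter (fun t => b t = s t)).card)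
      = ∑ s : Fin n → ZMod 2, g (n - w s) := by
  rw [← Equiv.sum_comp (Equiv.addLeft b)
    (fun s => g ((univ.filter (fun t => b t = s t)).card))]
  refine Finset.sum_congr rfl fun s _ => ?_
  congr 1
  have : (univ.filter (fun t => b t = (Equiv.addLeft b s) t))
      = univ.filter (fun t => ¬ s t = 1) := by
    refine Finset.filter_congr fun t _ => ?_
    simp [Equiv.addLeft, ← zmod2_zero_iff, left_eq_add]
  rw [this, card_not]
  rfl

end IndexAux

namespace IndexAux

lemma max_cast {w n : ℕ} (hw : w ≤ n) :
    ((max w (n - w) : ℕ) : ℝ) = (n : ℝ) / 2 + |(n : ℝ) / 2 - w| := by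
  rcases le_or_gt (2 * w) n with h | h
  · have h' : (w : ℝ) * 2 ≤ n := by exact_mod_cast by omega
    rw [max_eq_right (by omega), abs_of_nonneg (by linarith), Nat.cast_sub hw]
    ring
  · have h' : (n : ℝ) ≤ w * 2 := by exact_mod_cast by omega
    rw [max_eq_left (by omega), abs_of_nonpos (by linarith)]
    ring

lemma key {n : ℕ} (hn : 1 ≤ n) :
    2 * ((1 / (n * 2 ^ n) : ℝ) *
        ((∑ s : Fin n → ZMod 2, max (w s) (n - w s) : ℕ) : ℝ)) - 1
      = (2 / n : ℝ) * (1 / 2 ^ n) *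
        ∑ s : Fin n → ZMod 2, |(n / 2 : ℝ) - (w s : ℝ)| := by
  rw [Nat.cast_sum]
  have hc : ∑ s : Fin n → ZMod 2, ((max (w s) (n - w s) : ℕ) : ℝ)
      = 2 ^ n * ((n : ℝ) / 2) + ∑ s : Fin n → ZMod 2, |(n / 2 : ℝ) - (w s : ℝ)| := by
    rw [Finset.sum_congr rfl (fun s _ => max_cast (w_le s)), Finset.sum_add_distrib,
      Finset.sum_const, card_univ]
    simp [nsmul_eq_mul]
  rw [hc]
  have hn' : (1 : ℝ) ≤ n := by exact_mod_cast hn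
  have h1 : (n : ℝ) ≠ 0 := by linarith
  have h2 : (2 : ℝ) ^ n ≠ 0 := by positivity
  field_simp
  ring

end IndexAux

open IndexAux in
/-- The maximum bias over all deterministic classical strategies for the
INDEX game equals `(2/n)·2^{−n}·Σ_s |n/2 − w(s)|`, where `w(s)` is the Hamming weight. -/
theorem index_game_classical_bias_eq (n : ℕ) (hn : 1 ≤ n) :
    IsGreatest
      {β : ℝ | ∃ (a : (Fin n → ZMod 2) → ZMod 2) (b : Fin n → ZMod 2),
        β = 2 * ((1 / (n * 2 ^ n) : ℝ) *
          ((Finset.univ.filter (fun p : (Fin n → ZMod 2) × Fin n =>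
            a p.1 + b p.2 = p.1 p.2)).card : ℝ)) - 1}
      ((2 / n : ℝ) * (1 / 2 ^ n) * ∑ s : Fin n → ZMod 2,
        |(n / 2 : ℝ) - ((Finset.univ.filter (fun i : Fin n => s i = 1)).card : ℝ)|) := by
  simp only [show ∀ s : Fin n → ZMod 2,
      (univ.filter (fun i : Fin n => s i = 1)).card = w s from fun _ => rfl]
  constructor
  · refine ⟨fun s => if n ≤ 2 * w s then 1 else 0, fun _ => 0, ?_⟩
    have hcard : (univ.filter (fun p : (Fin n → ZMod 2) × Fin n =>
        (if n ≤ 2 * w p.1 then (1 : ZMod 2) else 0) + (0 : ZMod 2) = p.1 p.2)).card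
        = ∑ s : Fin n → ZMod 2, max (w s) (n - w s) := by
      rw [card_prod (fun s => if n ≤ 2 * w s then (1 : ZMod 2) else 0) (fun _ => 0)]
      refine Finset.sum_congr rfl fun s _ => ?_
      by_cases h : n ≤ 2 * w s
      · have : (univ.filter (fun t => (if n ≤ 2 * w s then (1 : ZMod 2) else 0) + 0 = s t))
            = univ.filter (fun t => s t = 1) := by
          refine Finset.filter_congr fun t _ => ?_
          simp [if_pos h, eq_comm]
        rw [this, max_eq_left (by omega)]
        rfl
      · have : (univ.filter (fun t => (if n ≤ 2 * w s then (1 : ZMod 2) else 0) + 0 = s t))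
            = univ.filter (fun t => ¬ s t = 1) := by
          refine Finset.filter_congr fun t _ => ?_
          simp [if_neg h, eq_comm, zmod2_zero_iff]
        have hw := w_le s
        rw [this, card_not, max_eq_right (by omega)]
        rfl
    rw [hcard]
    exact (key hn).symm
  · rintro β ⟨a, b, rfl⟩
    have hle : (univ.filter (fun p : (Fin n → ZMod 2) × Fin n =>
        a p.1 + b p.2 = p.1 p.2)).card ≤ ∑ s : Fin n → ZMod 2, max (w s) (n - w s) := by
      rw [card_prod]
      calc ∑ s : Fin n → ZMod 2, (univ.filter (fun t => a s + b t = s t)).card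
          ≤ ∑ s : Fin n → ZMod 2, max ((univ.filter (fun t => b t = s t)).card)
              (n - (univ.filter (fun t => b t = s t)).card) :=
            Finset.sum_le_sum fun s _ => fiber_le a b s
        _ = ∑ s : Fin n → ZMod 2, max (n - w s) (n - (n - w s)) :=
            sum_reindex b (fun m => max m (n - m))
        _ = ∑ s : Fin n → ZMod 2, max (w s) (n - w s) := by
            refine Finset.sum_congr rfl fun s _ => ?_
            have := w_le s
            omega
    rw [← key hn]
    have hpos : (0 : ℝ) ≤ (1 / (n * 2 ^ n) : ℝ) := by positivity
    have : ((univ.filter (fun p : (Fin n → ZMod 2) × Fin n =>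
        a p.1 + b p.2 = p.1 p.2)).card : ℝ)
        ≤ ((∑ s : Fin n → ZMod 2, max (w s) (n - w s) : ℕ) : ℝ) := by exact_mod_cast hle
    nlinarith [this, hpos]
end

section
/- There exists a constant C > 0 such that for every integer n ≥ 2, the optimal classical bias β_n of the INDEX^n game—namely β_n := max over functions a : {0,1}^n → {0,1} and b : {1,…,n} → {0,1} of (2/(n·2^n)) · #{(s,t) : a(s) ⊕ b(t) = s_t} − 1—satisfies |β_n − √(2/(π n))| ≤ C · n^{−3/2}; that is, β_n = √(2/(π n)) · (1 + O(1/n)). -/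
/-!
Once Bob has fixed `b`, Alice's best answer on question `s` is the majority bit of `s + b`, so the
best number of wins is `∑ u, max #{t | u t = 0} #{t | u t = 1}`, whatever `b` is; `b = 0` with the
majority answer attains it. Counting `u` by its number of ones and using the absorption identities
for binomial coefficients, this sum is `n 2^(n-1) + n C(n-1, ⌊n/2⌋)`, so `β_n = C(2m, m) / 4^m` with
`m = ⌊n/2⌋`. Wallis' bounds on `π/2` say that `(C(2m, m) / 4^m)^2` lies between `2 / (π (2m+1))` and
`2 (2m+2) / (π (2m+1)^2)`, hence `|β_n^2 - 2/(π n)| ≤ 2/(π n^2)`; dividing by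
`β_n + √(2/(π n))` gives `|β_n - √(2/(π n))| ≤ √(2/π) n^(-3/2)`.
-/

open Finset

lemma Nat.choose_mul_max_sub (N k : ℕ) :
    (N + 1).choose k * max (N + 1 - k) k =
      (N + 1) * if k ≤ (N + 1) / 2 then N.choose k else N.choose (k - 1) := by
  split_ifs with hk
  · rw [max_eq_left (by omega), ← Nat.choose_mul_succ_eq, mul_comm]
  · obtain ⟨j, rfl⟩ : ∃ j, k = j + 1 := ⟨k - 1, by omega⟩
    rw [max_eq_right (by omega), Nat.add_sub_cancel, Nat.add_one_mul_choose_eq]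

lemma Nat.sum_range_choose_mul_max_sub (N : ℕ) :
    ∑ k ∈ range (N + 2), (N + 1).choose k * max (N + 1 - k) k =
      (N + 1) * (2 ^ N + N.choose ((N + 1) / 2)) := by
  set h := (N + 1) / 2
  have hh : h + 1 ≤ N + 2 := by omega
  simp only [Nat.choose_mul_max_sub, ← mul_sum]
  congr 1
  rw [← sum_range_add_sum_Ico _ hh]
  have hlow : ∑ k ∈ range (h + 1), (if k ≤ h then N.choose k else N.choose (k - 1)) =
      ∑ k ∈ range h, N.choose k + N.choose h := by
    rw [sum_range_succ, if_pos le_rfl]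
    congr 1
    exact sum_congr rfl fun k hk => if_pos (by simp at hk; omega)
  have hhigh : ∑ k ∈ Ico (h + 1) (N + 2), (if k ≤ h then N.choose k else N.choose (k - 1)) =
      ∑ k ∈ Ico h (N + 1), N.choose k := by
    rw [← sum_Ico_add' (c := 1)]
    exact sum_congr rfl fun k hk => if_neg (by simp at hk; omega)
  rw [hlow, hhigh, add_right_comm, sum_range_add_sum_Ico _ (by omega), Nat.sum_range_choose]

lemma Nat.choose_half_div_two_pow (N : ℕ) :
    (N.choose ((N + 1) / 2) : ℝ) / 2 ^ N = centralBinom ((N + 1) / 2) / 4 ^ ((N + 1) / 2) := by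
  obtain ⟨m, rfl | rfl⟩ := N.even_or_odd'
  · rw [show (2 * m + 1) / 2 = m by omega, centralBinom, pow_mul]
    norm_num
  · have hsucc : centralBinom (m + 1) = 2 * (2 * m + 1).choose (m + 1) := by
      rw [centralBinom, show 2 * (m + 1) = 2 * m + 1 + 1 by ring, Nat.choose_succ_succ',
        Nat.choose_symm_half]
      ring
    rw [show (2 * m + 1 + 1) / 2 = m + 1 by omega, hsucc, pow_succ, pow_mul]
    push_cast
    field_simp
    ring

section CentralBinomAsymptotics

open Real Real.Wallis Nat

lemma abs_sub_le_of_abs_sq_sub_le {x y ε : ℝ} (hx : 0 ≤ x) (hy : 0 < y)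
    (h : |x ^ 2 - y ^ 2| ≤ ε * y ^ 2) : |x - y| ≤ ε * y := by
  have hxy : |x - y| * (x + y) = |x ^ 2 - y ^ 2| := by
    rw [← abs_of_nonneg (by positivity : 0 ≤ x + y), ← abs_mul]
    ring_nf
  refine le_of_mul_le_mul_right ?_ hy
  calc |x - y| * y ≤ |x - y| * (x + y) := by gcongr; linarith
    _ ≤ ε * y * y := by rw [hxy]; linarith

lemma centralBinom_div_four_pow_sq (m : ℕ) :
    ((centralBinom m : ℝ) / 4 ^ m) ^ 2 = (W m * (2 * m + 1))⁻¹ := by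
  have hc : (centralBinom m : ℝ) * m ! * m ! = (2 * m)! := by
    have := Nat.choose_mul_factorial_mul_factorial (show m ≤ 2 * m by omega)
    rw [show 2 * m - m = m by omega] at this
    exact_mod_cast this
  rw [W_eq_factorial_ratio, ← hc, show (2 : ℝ) ^ (4 * m) = (4 ^ m) ^ 2 by
    rw [show (4 : ℝ) = 2 ^ 2 by norm_num, ← pow_mul, ← pow_mul]; ring_nf]
  have : (0 : ℝ) < centralBinom m := by exact_mod_cast centralBinom_pos m
  field_simp

lemma two_div_le_centralBinom_div_four_pow_sq (m : ℕ) :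
    2 / (π * (2 * m + 1)) ≤ ((centralBinom m : ℝ) / 4 ^ m) ^ 2 := by
  rw [centralBinom_div_four_pow_sq, show 2 / (π * (2 * m + 1)) = (π / 2 * (2 * m + 1))⁻¹ by
    field_simp]
  gcongr
  · exact mul_pos (W_pos m) (by positivity)
  · exact W_le m

lemma centralBinom_div_four_pow_sq_le (m : ℕ) :
    ((centralBinom m : ℝ) / 4 ^ m) ^ 2 ≤ 2 * (2 * m + 2) / (π * (2 * m + 1) ^ 2) := by
  rw [centralBinom_div_four_pow_sq, show 2 * (2 * m + 2) / (π * (2 * m + 1) ^ 2) =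
    ((2 * m + 1) / (2 * m + 2) * (π / 2) * (2 * m + 1) : ℝ)⁻¹ by field_simp]
  gcongr
  exact le_W m

lemma abs_centralBinom_half_div_four_pow_sq_sub_le {n : ℕ} (hn : 0 < n) :
    |((centralBinom (n / 2) : ℝ) / 4 ^ (n / 2)) ^ 2 - 2 / (π * n)| ≤ 1 / n * (2 / (π * n)) := by
  have hlow := two_div_le_centralBinom_div_four_pow_sq (n / 2)
  have hupp := centralBinom_div_four_pow_sq_le (n / 2)
  have hn' : (1 : ℝ) ≤ n := by exact_mod_cast hn
  have hlow' : 2 / (π * n) - 1 / n * (2 / (π * n)) ≤ 2 / (π * (2 * (n / 2 : ℕ) + 1)) := by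
    rw [show 2 / (π * n) - 1 / n * (2 / (π * n)) = 2 * (n - 1) / (π * n ^ 2) by field_simp,
      div_le_div_iff₀ (by positivity) (by positivity)]
    have : 2 * ((n / 2 : ℕ) : ℝ) ≤ n := by norm_cast; omega
    nlinarith [pi_pos, mul_nonneg (mul_nonneg pi_pos.le (sub_nonneg.2 hn')) (sub_nonneg.2 this)]
  have hupp' : 2 * (2 * (n / 2 : ℕ) + 2) / (π * (2 * (n / 2 : ℕ) + 1) ^ 2) ≤
      2 / (π * n) + 1 / n * (2 / (π * n)) := by
    rw [show 2 / (π * n) + 1 / n * (2 / (π * n)) = 2 * (n + 1) / (π * n ^ 2) by field_simp,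
      div_le_div_iff₀ (by positivity) (by positivity)]
    obtain ⟨m, rfl | rfl⟩ := n.even_or_odd'
    · rw [show 2 * m / 2 = m by omega]
      push_cast
      nlinarith [pi_pos]
    · rw [show (2 * m + 1) / 2 = m by omega]
      push_cast
      nlinarith [pi_pos]
  rw [abs_le]
  constructor <;> linarith

lemma abs_centralBinom_half_div_four_pow_sub_le {n : ℕ} (hn : 0 < n) :
    |(centralBinom (n / 2) : ℝ) / 4 ^ (n / 2) - √(2 / (π * n))| ≤ (n : ℝ) ^ (-(3 : ℝ) / 2) := by
  have hn' : (0 : ℝ) < n := by exact_mod_cast hn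
  calc _ ≤ 1 / n * √(2 / (π * n)) := by
        refine abs_sub_le_of_abs_sq_sub_le (by positivity) (by positivity) ?_
        rw [sq_sqrt (by positivity)]
        exact abs_centralBinom_half_div_four_pow_sq_sub_le hn
    _ ≤ 1 / n * √(n⁻¹) := by
        gcongr
        rw [div_le_iff₀ (by positivity), inv_mul_eq_div, mul_div_cancel_right₀ _ hn'.ne']
        linarith [pi_gt_three]
    _ = (n : ℝ) ^ (-(3 : ℝ) / 2) := by
        rw [show -(3 : ℝ) / 2 = -1 + -(1 / 2) by norm_num, rpow_add hn', rpow_neg_one,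
          rpow_neg hn'.le, ← sqrt_eq_rpow, sqrt_inv, one_div]

end CentralBinomAsymptotics

namespace IndexGame

variable {ι : Type*} [Fintype ι]

def majorityCount (u : ι → ZMod 2) : ℕ :=
  max #{t | u t = 0} #{t | u t = 1}

def majorityGuess (u : ι → ZMod 2) : ZMod 2 :=
  if #{t | u t = 0} ≤ #{t | u t = 1} then 1 else 0

lemma card_filter_le_majorityCount (u : ι → ZMod 2) (x : ZMod 2) :
    #{t | u t = x} ≤ majorityCount u := by
  fin_cases x
  exacts [le_max_left _ _, le_max_right _ _]

lemma card_filter_majorityGuess (u : ι → ZMod 2) :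
    #{t | u t = majorityGuess u} = majorityCount u := by
  unfold majorityGuess majorityCount
  split_ifs with h
  · exact (max_eq_right h).symm
  · exact (max_eq_left (le_of_not_ge h)).symm

variable [DecidableEq ι]

def winCount (a : (ι → ZMod 2) → ZMod 2) (b : ι → ZMod 2) : ℕ :=
  #{p : (ι → ZMod 2) × ι | a p.1 + b p.2 = p.1 p.2}

lemma winCount_eq_sum (a : (ι → ZMod 2) → ZMod 2) (b : ι → ZMod 2) :
    winCount a b = ∑ s, #{t | s t + b t = a s} := by
  simp only [winCount, card_filter, Fintype.sum_prod_type, CharTwo.add_eq_iff_eq_add, eq_comm]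

lemma winCount_le_sum_majorityCount (a : (ι → ZMod 2) → ZMod 2) (b : ι → ZMod 2) :
    winCount a b ≤ ∑ u : ι → ZMod 2, majorityCount u := by
  rw [winCount_eq_sum, ← Equiv.sum_comp (Equiv.addRight b) majorityCount]
  exact sum_le_sum fun s _ => card_filter_le_majorityCount (s + b) (a s)

lemma winCount_majorityGuess_zero :
    winCount majorityGuess (0 : ι → ZMod 2) = ∑ u : ι → ZMod 2, majorityCount u := by
  simp only [winCount_eq_sum, Pi.zero_apply, add_zero, card_filter_majorityGuess]

def onesEquiv : (ι → ZMod 2) ≃ Finset ι where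
  toFun u := {t | u t = 1}
  invFun A t := if t ∈ A then 1 else 0
  left_inv u := by
    funext t
    simp only [mem_filter, mem_univ, true_and]
    generalize u t = x
    fin_cases x <;> rfl
  right_inv A := by
    ext t
    by_cases h : t ∈ A <;> simp [h]

lemma majorityCount_eq (u : ι → ZMod 2) :
    majorityCount u = max (Fintype.card ι - #(onesEquiv u)) #(onesEquiv u) := by
  have hzero : #{t | u t = 0} = #{t | ¬u t = 1} := by
    congr 1
    ext t
    simp only [mem_filter, mem_univ, true_and]
    generalize u t = x
    revert x; decide
  rw [majorityCount, hzero, ← card_univ,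
    ← card_filter_add_card_filter_not (s := univ) (fun t => u t = 1)]
  simp [onesEquiv]

lemma sum_majorityCount :
    ∑ u : ι → ZMod 2, majorityCount u =
      ∑ k ∈ range (Fintype.card ι + 1), (Fintype.card ι).choose k * max (Fintype.card ι - k) k := by
  rw [← onesEquiv.symm.sum_comp]
  simp only [majorityCount_eq, Equiv.apply_symm_apply]
  rw [← powerset_univ, Finset.sum_powerset_apply_card (fun k => max (Fintype.card ι - k) k)]
  simp

lemma two_mul_sum_majorityCount_div_sub_one [Nonempty ι] :
    2 * ((1 / (Fintype.card ι * 2 ^ Fintype.card ι) : ℝ) *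
        (∑ u : ι → ZMod 2, majorityCount u : ℕ)) - 1 =
      Nat.centralBinom (Fintype.card ι / 2) / 4 ^ (Fintype.card ι / 2) := by
  obtain ⟨N, hN⟩ : ∃ N, Fintype.card ι = N + 1 :=
    Nat.exists_eq_succ_of_ne_zero Fintype.card_ne_zero
  rw [sum_majorityCount, hN, Nat.sum_range_choose_mul_max_sub, ← Nat.choose_half_div_two_pow]
  push_cast
  field_simp
  ring

end IndexGame

/-- The optimal classical bias `β_n` of the INDEX game satisfies
`β_n = √(2/(πn))·(1 + O(1/n))`: there is a constant `C > 0` such that for all `n ≥ 2`,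
`|β_n − √(2/(πn))| ≤ C·n^{−3/2}`. -/
theorem index_game_classical_bias_asymptotics :
    ∃ C : ℝ, 0 < C ∧ ∀ n : ℕ, 2 ≤ n →
      ∃ β : ℝ,
        IsGreatest
          {β' : ℝ | ∃ (a : (Fin n → ZMod 2) → ZMod 2) (b : Fin n → ZMod 2),
            β' = 2 * ((1 / (n * 2 ^ n) : ℝ) *
              ((Finset.univ.filter (fun p : (Fin n → ZMod 2) × Fin n =>
                a p.1 + b p.2 = p.1 p.2)).card : ℝ)) - 1} β ∧
        |β - Real.sqrt (2 / (Real.pi * n))| ≤ C * (n : ℝ) ^ (-(3 : ℝ) / 2) := by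
  refine ⟨1, one_pos, fun n hn => ?_⟩
  have : Nonempty (Fin n) := ⟨⟨0, by omega⟩⟩
  have hbias := IndexGame.two_mul_sum_majorityCount_div_sub_one (ι := Fin n)
  rw [Fintype.card_fin] at hbias
  refine ⟨Nat.centralBinom (n / 2) / 4 ^ (n / 2), ⟨⟨IndexGame.majorityGuess, 0, ?_⟩, ?_⟩, ?_⟩
  · rw [← hbias, ← IndexGame.winCount_majorityGuess_zero]
    rfl
  · rintro _ ⟨a, b, rfl⟩
    rw [← hbias]
    gcongr
    exact IndexGame.winCount_le_sum_majorityCount a b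
  · rw [one_mul]
    exact abs_centralBinom_half_div_four_pow_sub_le (by omega)
end

section
/- Let n ≥ 2, d ≥ 1, and let ρ : {0,1}^n → M_d(ℂ) be a family of matrices that is even-parity-oblivious, i.e., for every subset S ⊆ {1,…,n} of even size |S| ≥ 2, Σ_{x : x_S = 0} ρ_x = Σ_{x : x_S = 1} ρ_x. Then the function s ↦ ρ_s + ρ_{s̄}, where s̄ denotes the bitwise complement of s, is constant on {0,1}^n. -/
/-!
Expand `ρ` in the Walsh basis: with `F S = ∑ₓ (-1)^{x_S} ρₓ`, Fourier inversion gives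
`2ⁿ ρ_y = ∑_S (-1)^{y_S} F S`. Complementing `y` multiplies the `S`-th term by `(-1)^{|S|}`, so in
`2ⁿ (ρ_s + ρ_{s̄})` the odd terms cancel and the even ones double. Even-parity-obliviousness says
exactly that `F S = 0` for even `|S| ≥ 2`, which leaves `2 F ∅`, independent of `s`.
-/

open Finset

lemma neg_one_pow_val_add (a b : ZMod 2) :
    (-1 : ℤ) ^ (a + b).val = (-1) ^ a.val * (-1) ^ b.val := by
  rw [ZMod.val_add, ← pow_add, neg_one_pow_eq_pow_mod_two (n := a.val + b.val)]

lemma neg_one_pow_val_smul {M : Type*} [AddCommGroup M] (a : ZMod 2) (m : M) :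
    (-1 : ℤ) ^ a.val • m = (if a = 0 then m else 0) - (if a = 1 then m else 0) := by
  obtain rfl | rfl : a = 0 ∨ a = 1 := by revert a; decide
  all_goals simp [ZMod.val_one]

lemma one_add_neg_one_pow_val (a : ZMod 2) :
    1 + (-1 : ℤ) ^ a.val = if a = 0 then 2 else 0 := by
  obtain rfl | rfl : a = 0 ∨ a = 1 := by revert a; decide
  all_goals rfl

lemma add_eq_zero_iff_eq_of_zmod_two {ι : Type*} {x y : ι → ZMod 2} : y + x = 0 ↔ x = y := by
  rw [add_eq_zero_iff_eq_neg', funext_iff, funext_iff]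
  simp [ZMod.neg_eq_self_mod_two]

section Walsh

variable {ι : Type*}

def walsh (S : Finset ι) (x : ι → ZMod 2) : ℤ := (-1) ^ (∑ i ∈ S, x i).val

lemma walsh_add (S : Finset ι) (x y : ι → ZMod 2) :
    walsh S (x + y) = walsh S x * walsh S y := by
  simp only [walsh, Pi.add_apply, sum_add_distrib, neg_one_pow_val_add]

lemma walsh_one (S : Finset ι) : walsh S 1 = (-1) ^ #S := by
  simp only [walsh, Pi.one_apply, sum_const, nsmul_one, ZMod.val_natCast,
    ← neg_one_pow_eq_pow_mod_two]

@[simp] lemma walsh_empty (x : ι → ZMod 2) : walsh ∅ x = 1 := by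
  simp [walsh]

variable [DecidableEq ι]

lemma walsh_eq_prod (S : Finset ι) (x : ι → ZMod 2) :
    walsh S x = ∏ i ∈ S, (-1) ^ (x i).val := by
  induction S using Finset.induction_on with
  | empty => simp
  | insert j S hj ih => rw [prod_insert hj, ← ih, walsh, walsh, sum_insert hj, neg_one_pow_val_add]

variable [Fintype ι]

lemma sum_walsh (z : ι → ZMod 2) :
    ∑ S : Finset ι, walsh S z = if z = 0 then 2 ^ Fintype.card ι else 0 := by
  simp_rw [walsh_eq_prod, ← powerset_univ, ← prod_one_add, one_add_neg_one_pow_val, prod_ite_zero,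
    prod_const, card_univ, mem_univ, true_implies, funext_iff, Pi.zero_apply]

variable {M : Type*} [AddCommGroup M]

def walshCoeff (ρ : (ι → ZMod 2) → M) (S : Finset ι) : M := ∑ x, walsh S x • ρ x

lemma walshCoeff_eq_sub (ρ : (ι → ZMod 2) → M) (S : Finset ι) :
    walshCoeff ρ S = ∑ x ∈ univ.filter (fun x => ∑ i ∈ S, x i = 0), ρ x -
      ∑ x ∈ univ.filter (fun x => ∑ i ∈ S, x i = 1), ρ x := by
  simp only [walshCoeff, walsh, sum_filter, ← sum_sub_distrib, neg_one_pow_val_smul]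

theorem sum_walsh_smul_walshCoeff (ρ : (ι → ZMod 2) → M) (y : ι → ZMod 2) :
    ∑ S, walsh S y • walshCoeff ρ S = 2 ^ Fintype.card ι • ρ y := by
  simp only [walshCoeff, smul_sum, smul_smul, ← walsh_add]
  rw [sum_comm]
  simp only [← sum_smul, sum_walsh, add_eq_zero_iff_eq_of_zmod_two, ite_smul, zero_smul,
    sum_ite_eq', mem_univ, if_true]
  norm_cast

theorem two_pow_card_smul_add_compl {ρ : (ι → ZMod 2) → M}
    (hρ : ∀ S : Finset ι, 2 ≤ #S → Even #S → walshCoeff ρ S = 0) (s : ι → ZMod 2) :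
    2 ^ Fintype.card ι • (ρ s + ρ (s + 1)) = 2 • walshCoeff ρ ∅ := by
  have hterm : ∀ S : Finset ι, walsh S s • walshCoeff ρ S + walsh S (s + 1) • walshCoeff ρ S =
      (1 + (-1) ^ #S) • walsh S s • walshCoeff ρ S := by
    intro S
    rw [walsh_add, walsh_one, mul_comm, mul_smul, add_smul, one_smul]
  rw [smul_add, ← sum_walsh_smul_walshCoeff, ← sum_walsh_smul_walshCoeff, ← sum_add_distrib,
    sum_congr rfl fun S _ => hterm S, sum_eq_single_of_mem ∅ (mem_univ _)]
  · simp [two_zsmul, two_nsmul]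
  · intro S _ hS
    rcases Nat.even_or_odd #S with heven | hodd
    · have : 2 ≤ #S := by
        obtain ⟨k, hk⟩ := heven
        have := card_pos.2 (nonempty_iff_ne_empty.2 hS)
        omega
      simp [hρ S this heven]
    · simp [hodd.neg_one_pow]

end Walsh

theorem even_parity_oblivious_symmetrization_constant_general
    (n d : ℕ)
    (ρ : (Fin n → ZMod 2) → Matrix (Fin d) (Fin d) ℂ)
    (hepo : ∀ S : Finset (Fin n), 2 ≤ S.card → Even S.card →
      ∑ x ∈ Finset.univ.filter (fun x : Fin n → ZMod 2 => ∑ i ∈ S, x i = 0), ρ x =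
      ∑ x ∈ Finset.univ.filter (fun x : Fin n → ZMod 2 => ∑ i ∈ S, x i = 1), ρ x) :
    ∀ s s' : Fin n → ZMod 2,
      ρ s + ρ (fun i => s i + 1) = ρ s' + ρ (fun i => s' i + 1) := by
  intro s s'
  have hcoeff : ∀ S : Finset (Fin n), 2 ≤ #S → Even #S → walshCoeff ρ S = 0 := fun S h2 he => by
    rw [walshCoeff_eq_sub, hepo S h2 he, sub_self]
  have h := (two_pow_card_smul_add_compl hcoeff s).trans (two_pow_card_smul_add_compl hcoeff s').symm
  rw [← Nat.cast_smul_eq_nsmul ℂ, ← Nat.cast_smul_eq_nsmul ℂ] at h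
  exact smul_right_injective _ (by simp) h

/-- If a family of matrices `ρ_x` is even-parity-oblivious, then the
symmetrization `s ↦ ρ_s + ρ_{s̄}` (with `s̄` the bitwise complement) is constant. -/
theorem even_parity_oblivious_symmetrization_constant
    (n d : ℕ) (hn : 2 ≤ n) (hd : 1 ≤ d)
    (ρ : (Fin n → ZMod 2) → Matrix (Fin d) (Fin d) ℂ)
    (hepo : ∀ S : Finset (Fin n), 2 ≤ S.card → Even S.card →
      ∑ x ∈ Finset.univ.filter (fun x : Fin n → ZMod 2 => ∑ i ∈ S, x i = 0), ρ x =
      ∑ x ∈ Finset.univ.filter (fun x : Fin n → ZMod 2 => ∑ i ∈ S, x i = 1), ρ x) :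
    ∀ s s' : Fin n → ZMod 2,
      ρ s + ρ (fun i => s i + 1) = ρ s' + ρ (fun i => s' i + 1) :=
  even_parity_oblivious_symmetrization_constant_general n d ρ hepo
end

section
/- Let n ≥ 2, d ≥ 1, and let τ : {0,1}^n × {0,1} → M_d(ℂ) be a family of matrices. Define the block-diagonal matrices ρ_x := (1/2)·diag(τ_{x,0}, τ_{x,1}) ∈ M_{2d}(ℂ) and the matrices σ_x := (1/2)(τ_{x,0} + τ_{x̄,1}) ∈ M_d(ℂ), where x̄ is the bitwise complement of x. If the family {ρ_x} is parity-oblivious, i.e., for every S ⊆ {1,…,n} with |S| ≥ 2, Σ_{x : x_S = 0} ρ_x = Σ_{x : x_S = 1} ρ_x, then the family {σ_x} is also parity-oblivious: for every S with |S| ≥ 2, Σ_{x : x_S = 0} σ_x = Σ_{x : x_S = 1} σ_x. -/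
open Matrix BigOperators Finset

/-- Removing the classical message preserves parity-obliviousness: if the
block-diagonal encodings `ρ_x = (1/2)·diag(τ_{x,0}, τ_{x,1})` are parity-oblivious, then
so are the encodings `σ_x = (1/2)(τ_{x,0} + τ_{x̄,1})`. -/
theorem removing_classical_message_preserves_parity_obliviousness
    (n d : ℕ) (hn : 2 ≤ n) (hd : 1 ≤ d)
    (τ : (Fin n → ZMod 2) → ZMod 2 → Matrix (Fin d) (Fin d) ℂ)
    (ρ : (Fin n → ZMod 2) → Matrix (Fin d ⊕ Fin d) (Fin d ⊕ Fin d) ℂ)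
    (hρ : ∀ x, ρ x = (1 / 2 : ℂ) • Matrix.fromBlocks (τ x 0) 0 0 (τ x 1))
    (σ : (Fin n → ZMod 2) → Matrix (Fin d) (Fin d) ℂ)
    (hσ : ∀ x, σ x = (1 / 2 : ℂ) • (τ x 0 + τ (fun i => x i + 1) 1))
    (hpo : ∀ S : Finset (Fin n), 2 ≤ S.card →
      ∑ x ∈ Finset.univ.filter (fun x : Fin n → ZMod 2 => ∑ i ∈ S, x i = 0), ρ x =
      ∑ x ∈ Finset.univ.filter (fun x : Fin n → ZMod 2 => ∑ i ∈ S, x i = 1), ρ x) :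
    ∀ S : Finset (Fin n), 2 ≤ S.card →
      ∑ x ∈ Finset.univ.filter (fun x : Fin n → ZMod 2 => ∑ i ∈ S, x i = 0), σ x =
      ∑ x ∈ Finset.univ.filter (fun x : Fin n → ZMod 2 => ∑ i ∈ S, x i = 1), σ x := by
  intro S hS
  have h := hpo S hS
  simp only [hρ, ← Finset.smul_sum] at h
  have h2 : (∑ x ∈ Finset.univ.filter (fun x : Fin n → ZMod 2 => ∑ i ∈ S, x i = 0),
      Matrix.fromBlocks (τ x 0) 0 0 (τ x 1)) =
      ∑ x ∈ Finset.univ.filter (fun x : Fin n → ZMod 2 => ∑ i ∈ S, x i = 1),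
      Matrix.fromBlocks (τ x 0) 0 0 (τ x 1) :=
    smul_right_injective _ (by norm_num : (1/2 : ℂ) ≠ 0) h
  have hA : ∑ x ∈ Finset.univ.filter (fun x : Fin n → ZMod 2 => ∑ i ∈ S, x i = 0), τ x 0 =
      ∑ x ∈ Finset.univ.filter (fun x : Fin n → ZMod 2 => ∑ i ∈ S, x i = 1), τ x 0 := by
    ext i j
    have := congrFun (congrFun h2 (Sum.inl i)) (Sum.inl j)
    simpa [Matrix.sum_apply] using this
  have hB : ∑ x ∈ Finset.univ.filter (fun x : Fin n → ZMod 2 => ∑ i ∈ S, x i = 0), τ x 1 =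
      ∑ x ∈ Finset.univ.filter (fun x : Fin n → ZMod 2 => ∑ i ∈ S, x i = 1), τ x 1 := by
    ext i j
    have := congrFun (congrFun h2 (Sum.inr i)) (Sum.inr j)
    simpa [Matrix.sum_apply] using this
  have hinv : Function.Involutive (fun x : Fin n → ZMod 2 => fun i => x i + 1) := by
    intro x; funext i; change x i + 1 + 1 = x i; rw [add_assoc, show (1:ZMod 2)+1=0 from rfl, add_zero]
  have hcc : ∀ a : ZMod 2,
      ∑ x ∈ Finset.univ.filter (fun x : Fin n → ZMod 2 => ∑ i ∈ S, x i = a),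
        τ (fun i => x i + 1) 1 =
      ∑ x ∈ Finset.univ.filter
          (fun x : Fin n → ZMod 2 => ∑ i ∈ S, x i = a + (S.card : ZMod 2)), τ x 1 := by
    intro a
    refine Finset.sum_bijective _ hinv.bijective (fun x => ?_) (fun x _ => rfl)
    simp only [Finset.mem_filter, Finset.mem_univ, true_and]
    have hsum : ∑ i ∈ S, (x i + 1) = (∑ i ∈ S, x i) + (S.card : ZMod 2) := by
      rw [Finset.sum_add_distrib, Finset.sum_const, nsmul_eq_mul, mul_one]
    constructor
    · intro hx; rw [hsum, hx]
    · intro hx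
      have := hsum.symm.trans hx
      have h4 : ((S.card : ZMod 2)) + (S.card : ZMod 2) = 0 := by
        have : ∀ b : ZMod 2, b + b = 0 := by decide
        exact this _
      calc ∑ i ∈ S, x i = (∑ i ∈ S, x i) + ((S.card : ZMod 2) + (S.card : ZMod 2)) := by
            rw [h4, add_zero]
        _ = a + (S.card : ZMod 2) + (S.card : ZMod 2) := by rw [← add_assoc, ← hsum, hx]
        _ = a := by rw [add_assoc, h4, add_zero]
  have hC : ∑ x ∈ Finset.univ.filter
        (fun x : Fin n → ZMod 2 => ∑ i ∈ S, x i = (0 : ZMod 2) + (S.card : ZMod 2)), τ x 1 =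
      ∑ x ∈ Finset.univ.filter
        (fun x : Fin n → ZMod 2 => ∑ i ∈ S, x i = (1 : ZMod 2) + (S.card : ZMod 2)), τ x 1 := by
    rcases (by decide : ∀ b : ZMod 2, b = 0 ∨ b = 1) ((S.card : ZMod 2)) with hb | hb <;>
      simp only [hb, add_zero, zero_add] <;>
      first
        | exact hB
        | { norm_num [show (1:ZMod 2)+1 = 0 from rfl]; exact hB.symm }
  simp only [hσ, ← Finset.smul_sum, Finset.sum_add_distrib, hcc]
  rw [hA, hC]
end

section
/- Let n ≥ 2, let M be a finite message set, let R ≥ 1, let e : {0,1}^n × {1,…,R} → M be an encoding and f_t : M → {0,1} (t ∈ {1,…,n}) be decoders. Suppose the classical RAC is parity-oblivious: for every S ⊆ {1,…,n} with |S| ≥ 2 and every m ∈ M, #{(x,r) : x_S = 0 and e(x,r) = m} = #{(x,r) : x_S = 1 and e(x,r) = m}. Then the average success probability satisfies (1/(n·2^n·R)) · #{(x,r,t) : f_t(e(x,r)) = x_t} ≤ (1/2)(1 + 1/n); that is, the average-case bias is at most 1/n. -/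
/-!
For a message `m` let `c_m(y) = #{r | e y r = m}` on `(ZMod 2)ⁿ` and `N_m = ∑_y c_m(y)`.
Parity-obliviousness says that `c_m` has no Walsh–Fourier weight in degree at least two, so by
Fourier inversion `2ⁿ c_m(y) = N_m + ∑ₜ (-1)^{y_t} A_{t,m}`, where the `A_{t,m}` are its
degree-one coefficients. Nonnegativity of `c_m` at the point whose signs oppose those of the
`A_{t,m}` gives `∑ₜ |A_{t,m}| ≤ N_m`. Decoding bit `t` from `m` is correct on at most
`(N_m + |A_{t,m}|) / 2` encodings of `m`, hence on at most `(n + 1) N_m / 2` encodings per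
message and `(n + 1) 2ⁿ R / 2` in total.
-/

open Finset

namespace ParityOblivious

variable {ι β : Type*}

def bitSign (a : ZMod 2) : ℤ := if a = 0 then 1 else -1

@[simp] lemma bitSign_zero : bitSign 0 = 1 := rfl

@[simp] lemma bitSign_one : bitSign 1 = -1 := rfl

lemma bitSign_add : ∀ a b : ZMod 2, bitSign (a + b) = bitSign a * bitSign b := by decide

lemma bitSign_mul_bitSign_add_one :
    ∀ a b : ZMod 2, bitSign a * bitSign b + 1 = if a = b then 2 else 0 := by decide

lemma abs_bitSign : ∀ a : ZMod 2, |bitSign a| = 1 := by decide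

lemma sum_bitSign_eq_card_sub_card (s : Finset β) (a : β → ZMod 2) :
    ∑ p ∈ s, bitSign (a p) = (#{p ∈ s | a p = 0} : ℤ) - #{p ∈ s | a p = 1} := by
  have : ∀ p, bitSign (a p) = (if a p = 0 then 1 else 0) - (if a p = 1 then 1 else 0) := by
    intro p
    rcases (by decide : ∀ b : ZMod 2, b = 0 ∨ b = 1) (a p) with h | h <;> simp [h, bitSign]
  simp [this, sum_sub_distrib]

lemma two_mul_card_filter_eq (s : Finset β) (a : β → ZMod 2) (b : ZMod 2) :
    2 * (#{p ∈ s | a p = b} : ℤ) = #s + bitSign b * ∑ p ∈ s, bitSign (a p) := by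
  calc 2 * (#{p ∈ s | a p = b} : ℤ) = ∑ p ∈ s, if a p = b then 2 else 0 := by
        rw [sum_ite, sum_const, sum_const_zero]; simp [mul_comm]
    _ = ∑ p ∈ s, (bitSign (a p) * bitSign b + 1) :=
        sum_congr rfl fun p _ => (bitSign_mul_bitSign_add_one (a p) b).symm
    _ = #s + bitSign b * ∑ p ∈ s, bitSign (a p) := by
        rw [sum_add_distrib, mul_sum]; simp [add_comm, mul_comm]

lemma two_mul_card_filter_le (s : Finset β) (a : β → ZMod 2) (b : ZMod 2) :
    2 * (#{p ∈ s | a p = b} : ℤ) ≤ #s + |∑ p ∈ s, bitSign (a p)| := by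
  rw [two_mul_card_filter_eq]
  gcongr
  calc bitSign b * ∑ p ∈ s, bitSign (a p)
      ≤ |bitSign b * ∑ p ∈ s, bitSign (a p)| := le_abs_self _
    _ = |∑ p ∈ s, bitSign (a p)| := by rw [abs_mul, abs_bitSign, one_mul]

def walsh (S : Finset ι) (y : ι → ZMod 2) : ℤ := ∏ i ∈ S, bitSign (y i)

lemma walsh_eq_bitSign_sum (S : Finset ι) (y : ι → ZMod 2) :
    walsh S y = bitSign (∑ i ∈ S, y i) := by
  classical
  induction S using Finset.induction_on with
  | empty => simp [walsh, bitSign]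
  | insert i S hi ih => rw [walsh, prod_insert hi, sum_insert hi, bitSign_add, ← ih, walsh]

@[simp] lemma walsh_empty (y : ι → ZMod 2) : walsh ∅ y = 1 := prod_empty

@[simp] lemma walsh_singleton (i : ι) (y : ι → ZMod 2) : walsh {i} y = bitSign (y i) :=
  prod_singleton _ _

/-- The counting function `y ↦ #{p ∈ s | x p = y}` has Walsh–Fourier degree at most one. -/
def FourierDegreeLeOne (s : Finset β) (x : β → ι → ZMod 2) : Prop :=
  ∀ S : Finset ι, 2 ≤ #S → ∑ p ∈ s, walsh S (x p) = 0

variable [Fintype ι]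

lemma sum_walsh_mul_walsh [DecidableEq ι] (x y : ι → ZMod 2) :
    ∑ S : Finset ι, walsh S x * walsh S y = if x = y then 2 ^ Fintype.card ι else 0 := by
  simp_rw [walsh, ← prod_mul_distrib, ← powerset_univ, ← prod_add_one,
    bitSign_mul_bitSign_add_one, prod_ite_zero, funext_iff]
  simp

lemma two_pow_mul_card_filter_eq_sum_walsh [DecidableEq ι] (s : Finset β)
    (x : β → ι → ZMod 2) (y : ι → ZMod 2) :
    2 ^ Fintype.card ι * (#{p ∈ s | x p = y} : ℤ) =
      ∑ S : Finset ι, walsh S y * ∑ p ∈ s, walsh S (x p) := by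
  simp_rw [mul_sum, sum_comm (s := (univ : Finset (Finset ι))), mul_comm (walsh _ y),
    sum_walsh_mul_walsh, sum_ite, sum_const_zero, add_zero, sum_const, nsmul_eq_mul, mul_comm]

lemma sum_finset_eq_of_two_le_card {M : Type*} [AddCommMonoid M] [DecidableEq ι]
    (h : Finset ι → M) (hh : ∀ S, 2 ≤ #S → h S = 0) :
    ∑ S, h S = h ∅ + ∑ i, h {i} := by
  set T : Finset (Finset ι) := insert ∅ (univ.map ⟨singleton, singleton_injective⟩)
  have hT : ∑ S ∈ T, h S = ∑ S, h S := by
    refine sum_subset (subset_univ T) fun S _ hS => hh S ?_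
    by_contra! hcard
    interval_cases hc : #S
    · exact hS (by simp [T, card_eq_zero.mp hc])
    · obtain ⟨i, rfl⟩ := card_eq_one.mp hc
      exact hS (by simp [T])
  rw [← hT, sum_insert (by simp), sum_map]
  rfl

variable {s : Finset β} {x : β → ι → ZMod 2}

lemma FourierDegreeLeOne.two_pow_mul_card_filter_eq [DecidableEq ι] (hs : FourierDegreeLeOne s x)
    (y : ι → ZMod 2) :
    2 ^ Fintype.card ι * (#{p ∈ s | x p = y} : ℤ) =
      #s + ∑ i, bitSign (y i) * ∑ p ∈ s, bitSign (x p i) := by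
  rw [two_pow_mul_card_filter_eq_sum_walsh, sum_finset_eq_of_two_le_card]
  · simp
  · intro S hS
    rw [hs S hS, mul_zero]

lemma FourierDegreeLeOne.sum_abs_sum_bitSign_le_card (hs : FourierDegreeLeOne s x) :
    ∑ i, |∑ p ∈ s, bitSign (x p i)| ≤ #s := by
  classical
  -- evaluate the inversion formula at the point whose signs oppose those of the sums
  set y : ι → ZMod 2 := fun i => if 0 < ∑ p ∈ s, bitSign (x p i) then 1 else 0
  have hy : ∀ i,
      bitSign (y i) * ∑ p ∈ s, bitSign (x p i) = -|∑ p ∈ s, bitSign (x p i)| := by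
    intro i
    by_cases h : 0 < ∑ p ∈ s, bitSign (x p i)
    · simp [y, h, abs_of_pos h]
    · simp [y, h, abs_of_nonpos (not_lt.mp h)]
  have hinv := hs.two_pow_mul_card_filter_eq y
  simp only [hy, sum_neg_distrib] at hinv
  have : (0 : ℤ) ≤ 2 ^ Fintype.card ι * #{p ∈ s | x p = y} := by positivity
  linarith

lemma FourierDegreeLeOne.two_mul_sum_card_filter_le (hs : FourierDegreeLeOne s x)
    (b : ι → ZMod 2) :
    2 * ∑ i, (#{p ∈ s | x p i = b i} : ℤ) ≤ (Fintype.card ι + 1) * #s := by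
  calc 2 * ∑ i, (#{p ∈ s | x p i = b i} : ℤ)
      ≤ ∑ i, (#s + |∑ p ∈ s, bitSign (x p i)|) := by
        rw [mul_sum]; exact sum_le_sum fun i _ => two_mul_card_filter_le s _ (b i)
    _ ≤ (Fintype.card ι + 1) * #s := by
        rw [sum_add_distrib]
        simp only [sum_const, card_univ, nsmul_eq_mul]
        linarith [hs.sum_abs_sum_bitSign_le_card]

variable {Ω M : Type*} [DecidableEq ι] [Fintype Ω] [DecidableEq M]

def IsParityOblivious (e : (ι → ZMod 2) → Ω → M) : Prop :=
  ∀ S : Finset ι, 2 ≤ #S → ∀ m : M,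
    #{p : (ι → ZMod 2) × Ω | (∑ i ∈ S, p.1 i) = 0 ∧ e p.1 p.2 = m} =
      #{p : (ι → ZMod 2) × Ω | (∑ i ∈ S, p.1 i) = 1 ∧ e p.1 p.2 = m}

lemma IsParityOblivious.fourierDegreeLeOne_fiber {e : (ι → ZMod 2) → Ω → M}
    (he : IsParityOblivious e) (m : M) :
    FourierDegreeLeOne {p : (ι → ZMod 2) × Ω | e p.1 p.2 = m} Prod.fst := by
  intro S hS
  simp only [walsh_eq_bitSign_sum, sum_bitSign_eq_card_sub_card, filter_filter,
    and_comm (a := e _ _ = m)]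
  rw [he S hS m, sub_self]

lemma card_decoded_eq_sum_fiber [Fintype M] (e : (ι → ZMod 2) → Ω → M)
    (f : ι → M → ZMod 2) :
    #{q : (ι → ZMod 2) × Ω × ι | f q.2.2 (e q.1 q.2.1) = q.1 q.2.2} =
      ∑ m, ∑ i, #{p ∈ {p : (ι → ZMod 2) × Ω | e p.1 p.2 = m} | p.1 i = f i m} := by
  calc #{q : (ι → ZMod 2) × Ω × ι | f q.2.2 (e q.1 q.2.1) = q.1 q.2.2}
      = ∑ p : (ι → ZMod 2) × Ω, ∑ i, if p.1 i = f i (e p.1 p.2) then 1 else 0 := by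
        simp only [card_filter, Fintype.sum_prod_type, eq_comm]
    _ = ∑ m, ∑ p ∈ {p : (ι → ZMod 2) × Ω | e p.1 p.2 = m},
          ∑ i, if p.1 i = f i m then 1 else 0 := by
        rw [← sum_fiberwise _ fun p : (ι → ZMod 2) × Ω => e p.1 p.2]
        refine sum_congr rfl fun m _ => sum_congr rfl fun p hp => ?_
        rw [(mem_filter.mp hp).2]
    _ = _ := by
        simp only [card_filter]
        exact sum_congr rfl fun m _ => sum_comm

lemma IsParityOblivious.two_mul_card_decoded_le [Fintype M] {e : (ι → ZMod 2) → Ω → M}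
    (he : IsParityOblivious e) (f : ι → M → ZMod 2) :
    2 * #{q : (ι → ZMod 2) × Ω × ι | f q.2.2 (e q.1 q.2.1) = q.1 q.2.2} ≤
      (Fintype.card ι + 1) * (2 ^ Fintype.card ι * Fintype.card Ω) := by
  have hcard : ∑ m, (#{p : (ι → ZMod 2) × Ω | e p.1 p.2 = m} : ℤ) =
      2 ^ Fintype.card ι * Fintype.card Ω := by
    rw [← Nat.cast_sum, sum_card_fiberwise_eq_card_filter]
    simp
  zify
  rw [card_decoded_eq_sum_fiber, Nat.cast_sum, mul_sum, ← hcard, mul_sum]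
  push_cast
  exact sum_le_sum fun m _ => (he.fourierDegreeLeOne_fiber m).two_mul_sum_card_filter_le _

end ParityOblivious

open ParityOblivious

theorem parity_oblivious_classical_rac_average_bias_le_general
    (n R : ℕ)
    (M : Type) [Fintype M] [DecidableEq M]
    (e : (Fin n → ZMod 2) → Fin R → M)
    (f : Fin n → M → ZMod 2)
    (hpo : ∀ S : Finset (Fin n), 2 ≤ S.card → ∀ m : M,
      (Finset.univ.filter (fun p : (Fin n → ZMod 2) × Fin R =>
        (∑ i ∈ S, p.1 i) = 0 ∧ e p.1 p.2 = m)).card =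
      (Finset.univ.filter (fun p : (Fin n → ZMod 2) × Fin R =>
        (∑ i ∈ S, p.1 i) = 1 ∧ e p.1 p.2 = m)).card) :
    ((Finset.univ.filter (fun q : (Fin n → ZMod 2) × Fin R × Fin n =>
        f q.2.2 (e q.1 q.2.1) = q.1 q.2.2)).card : ℝ) / (n * 2 ^ n * R)
      ≤ (1 / 2) * (1 + 1 / n) := by
  have hbound : 2 * (#{q : (Fin n → ZMod 2) × Fin R × Fin n |
      f q.2.2 (e q.1 q.2.1) = q.1 q.2.2} : ℝ) ≤ (n + 1) * (2 ^ n * R) := by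
    have := (show IsParityOblivious e from hpo).two_mul_card_decoded_le f
    simp only [Fintype.card_fin] at this
    exact_mod_cast this
  rcases Nat.eq_zero_or_pos n with rfl | hn
  · simp
  refine div_le_of_le_mul₀ (by positivity) (by positivity) ?_
  have : (1 / 2) * (1 + 1 / n) * (n * 2 ^ n * R) = (n + 1) * (2 ^ n * R) / (2 : ℝ) := by
    field_simp
  linarith

/-- Every parity-oblivious classical random access code of `n ≥ 2` bits has
average success probability at most `(1/2)(1 + 1/n)`, i.e. average-case bias at most `1/n`. -/
theorem parity_oblivious_classical_rac_average_bias_le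
    (n R : ℕ) (hn : 2 ≤ n) (hR : 1 ≤ R)
    (M : Type) [Fintype M] [DecidableEq M]
    (e : (Fin n → ZMod 2) → Fin R → M)
    (f : Fin n → M → ZMod 2)
    (hpo : ∀ S : Finset (Fin n), 2 ≤ S.card → ∀ m : M,
      (Finset.univ.filter (fun p : (Fin n → ZMod 2) × Fin R =>
        (∑ i ∈ S, p.1 i) = 0 ∧ e p.1 p.2 = m)).card =
      (Finset.univ.filter (fun p : (Fin n → ZMod 2) × Fin R =>
        (∑ i ∈ S, p.1 i) = 1 ∧ e p.1 p.2 = m)).card) :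
    ((Finset.univ.filter (fun q : (Fin n → ZMod 2) × Fin R × Fin n =>
        f q.2.2 (e q.1 q.2.1) = q.1 q.2.2)).card : ℝ) / (n * 2 ^ n * R)
      ≤ (1 / 2) * (1 + 1 / n) :=
  parity_oblivious_classical_rac_average_bias_le_general n R M e f hpo
end

section
/- There exist a dimension d ≥ 1, a family of d×d density matrices ρ_x indexed by x ∈ {0,1}^6, and Hermitian matrices M_t (t ∈ {1,…,6}) with 0 ⪯ M_t ⪯ I, such that (i) for every subset S ⊆ {1,…,6} of odd size |S| ≥ 3, Σ_{x : x_S = 0} ρ_x = Σ_{x : x_S = 1} ρ_x (odd-parity-obliviousness), and (ii) for every x ∈ {0,1}^6 and every t, Re tr(ρ_x M_t) = (1/2)(1 + (−1)^{x_t}/√3); in particular every bit is decoded with bias 1/√3 > 1/√6, so odd-parity-oblivious quantum RACs can exceed the parity-oblivious bound 1/√n. -/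
/-!
Chuang's code sends three bits `a` to the pure qubit state whose Bloch vector is the cube vertex
`((-1)^a₀, (-1)^a₁, (-1)^a₂) / √3`; measuring along the `k`-th axis recovers `aₖ` with bias `1/√3`.
The state is affine in its Bloch vector, so the signed sum `∑ₐ (-1)^(a_T) ρₐ` only involves the
character sums of `T` and of `T Δ {k}`, all of which vanish once `|T| ≥ 2`. For the six-bit code
`ρₓ = ρ(x₀x₁x₂) ⊗ ρ(x₃x₄x₅)` the signed sum over `x` factors as a Kronecker product of the
signed sums of the two halves, and a set `S` with `|S| ≥ 3` meets one of the halves in at least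
two positions.
-/

open Matrix Finset
open scoped Kronecker ComplexOrder

def spin (z : ZMod 2) : ℝ := if z = 0 then 1 else -1

lemma ZMod.eq_zero_or_eq_one_of_two (z : ZMod 2) : z = 0 ∨ z = 1 := by
  decide +revert

lemma spin_add (a b : ZMod 2) : spin (a + b) = spin a * spin b := by
  rcases a.eq_zero_or_eq_one_of_two with rfl | rfl <;>
    rcases b.eq_zero_or_eq_one_of_two with rfl | rfl <;> simp [spin, CharTwo.add_self_eq_zero]

lemma spin_one : spin 1 = -1 :=
  if_neg one_ne_zero

lemma spin_mul_self (z : ZMod 2) : spin z * spin z = 1 := by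
  rw [← spin_add, CharTwo.add_self_eq_zero, spin, if_pos rfl]

lemma sum_spin_sum_eq_zero {ι : Type*} [Fintype ι] [DecidableEq ι] {T : Finset ι}
    (hT : T.Nonempty) : ∑ a : ι → ZMod 2, spin (∑ i ∈ T, a i) = 0 := by
  obtain ⟨i, hi⟩ := hT
  -- flipping the bit `i ∈ T` is a bijection that negates every term
  have hflip (a : ι → ZMod 2) :
      spin (∑ j ∈ T, (a + Pi.single i 1 : ι → ZMod 2) j) = -spin (∑ j ∈ T, a j) := by
    simp only [Pi.add_apply, sum_add_distrib, sum_pi_single', if_pos hi, spin_add, spin_one,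
      mul_neg_one]
  have := Equiv.sum_comp (Equiv.addRight (Pi.single i 1 : ι → ZMod 2))
    fun a : ι → ZMod 2 => spin (∑ j ∈ T, a j)
  simp only [Equiv.coe_addRight, hflip, sum_neg_distrib] at this
  linarith

lemma sum_spin_sum_mul_spin_eq_zero {ι : Type*} [Fintype ι] [DecidableEq ι] {T : Finset ι}
    (hT : 2 ≤ T.card) (k : ι) : ∑ a : ι → ZMod 2, spin (∑ i ∈ T, a i) * spin (a k) = 0 := by
  by_cases hk : k ∈ T
  · have hne : (T.erase k).Nonempty := by
      rw [← card_pos, card_erase_of_mem hk]; omega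
    simpa [← sum_erase_add T _ hk, spin_add, mul_assoc, spin_mul_self] using
      sum_spin_sum_eq_zero hne
  · simpa [sum_insert hk, spin_add, mul_comm] using sum_spin_sum_eq_zero (insert_nonempty k T)

lemma sum_filter_eq_zero_eq_sum_filter_eq_one {ι M : Type*} [AddCommGroup M] [Module ℝ M]
    (s : Finset ι) (f : ι → ZMod 2) (g : ι → M) (h : ∑ i ∈ s, spin (f i) • g i = 0) :
    ∑ i ∈ s with f i = 0, g i = ∑ i ∈ s with f i = 1, g i := by
  have hspin (i : ι) :
      spin (f i) • g i = (if f i = 0 then g i else 0) - (if f i = 1 then g i else 0) := by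
    rcases (f i).eq_zero_or_eq_one_of_two with h | h <;> simp [h, spin]
  rwa [sum_congr rfl fun i _ => hspin i, sum_sub_distrib, ← sum_filter, ← sum_filter,
    sub_eq_zero] at h

lemma Matrix.IsHermitian.posSemidef_of_isIdempotentElem {n R : Type*} [Fintype n] [CommRing R]
    [PartialOrder R] [StarRing R] [StarOrderedRing R] {A : Matrix n n R} (hA : A.IsHermitian)
    (hA' : IsIdempotentElem A) : A.PosSemidef := by
  simpa [hA.eq, hA'.eq] using posSemidef_conjTranspose_mul_self A

lemma Matrix.sum_kronecker_sum {α β l m n p R : Type*} [NonUnitalNonAssocSemiring R]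
    (s : Finset α) (t : Finset β) (A : α → Matrix l m R) (B : β → Matrix n p R) :
    (∑ a ∈ s, A a) ⊗ₖ (∑ b ∈ t, B b) = ∑ a ∈ s, ∑ b ∈ t, A a ⊗ₖ B b := by
  ext i j
  simp [Matrix.sum_apply, sum_mul_sum]

lemma Matrix.one_sub_kronecker_one {m n R : Type*} [DecidableEq m] [DecidableEq n] [Ring R]
    (A : Matrix m m R) : 1 - A ⊗ₖ (1 : Matrix n n R) = (1 - A) ⊗ₖ 1 := by
  rw [sub_eq_iff_eq_add, ← add_kronecker, sub_add_cancel, one_kronecker_one]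

lemma Matrix.one_sub_one_kronecker {m n R : Type*} [DecidableEq m] [DecidableEq n] [Ring R]
    (A : Matrix n n R) : 1 - (1 : Matrix m m R) ⊗ₖ A = 1 ⊗ₖ (1 - A) := by
  rw [sub_eq_iff_eq_add, ← kronecker_add, sub_add_cancel, one_kronecker_one]

lemma Matrix.trace_reindex {m n R : Type*} [Fintype m] [Fintype n] [AddCommMonoid R]
    (e : m ≃ n) (A : Matrix m m R) : (reindex e e A).trace = A.trace := by
  simp [trace, ← e.symm.sum_comp]

lemma Fin.sum_finset_add {m n : ℕ} {M : Type*} [AddCommMonoid M] (S : Finset (Fin (m + n)))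
    (f : Fin (m + n) → M) :
    ∑ i ∈ S, f i = ∑ i with Fin.castAdd n i ∈ S, f (Fin.castAdd n i) +
      ∑ j with Fin.natAdd m j ∈ S, f (Fin.natAdd m j) := by
  simp only [sum_filter]
  rw [← Fin.sum_univ_add (fun i => if i ∈ S then f i else 0), ← sum_filter,
    filter_mem_eq_inter, univ_inter]

noncomputable def pauli : Fin 3 → Matrix (Fin 2) (Fin 2) ℂ :=
  ![!![0, 1; 1, 0], !![0, -Complex.I; Complex.I, 0], !![1, 0; 0, -1]]

noncomputable def blochState (r : Fin 3 → ℝ) : Matrix (Fin 2) (Fin 2) ℂ :=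
  (2 : ℂ)⁻¹ • (1 + ∑ k, r k • pauli k)

lemma blochState_eq (r : Fin 3 → ℝ) : blochState r =
    (2 : ℂ)⁻¹ • !![1 + (r 2 : ℂ), r 0 - Complex.I * r 1; r 0 + Complex.I * r 1, 1 - r 2] := by
  ext i j
  fin_cases i <;> fin_cases j <;>
    simp [blochState, pauli, Fin.sum_univ_three, Complex.real_smul] <;> ring

lemma isHermitian_blochState (r : Fin 3 → ℝ) : (blochState r).IsHermitian := by
  ext i j
  fin_cases i <;> fin_cases j <;> simp [blochState_eq, conjTranspose_apply, sub_eq_add_neg]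

lemma trace_blochState (r : Fin 3 → ℝ) : (blochState r).trace = 1 := by
  simp [blochState_eq, trace_fin_two]; ring

lemma trace_blochState_mul_blochState (r s : Fin 3 → ℝ) :
    (blochState r * blochState s).trace = (((1 + ∑ k, r k * s k) / 2 : ℝ) : ℂ) := by
  simp [blochState_eq, trace_fin_two, Fin.sum_univ_three]
  linear_combination (-r 1 * s 1 / 2 : ℂ) * Complex.I_sq

lemma isIdempotentElem_blochState {r : Fin 3 → ℝ} (hr : ∑ k, r k ^ 2 = 1) :
    IsIdempotentElem (blochState r) := by
  rw [Fin.sum_univ_three] at hr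
  have hr' : (r 0 : ℂ) ^ 2 + (r 1 : ℂ) ^ 2 + (r 2 : ℂ) ^ 2 = 1 := by exact_mod_cast hr
  ext i j
  fin_cases i <;> fin_cases j <;> simp [blochState_eq, mul_apply, Fin.sum_univ_two]
  · linear_combination (1 / 4 : ℂ) * hr' - (r 1 : ℂ) ^ 2 / 4 * Complex.I_sq
  · ring
  · ring
  · linear_combination (1 / 4 : ℂ) * hr' - (r 1 : ℂ) ^ 2 / 4 * Complex.I_sq

lemma posSemidef_blochState {r : Fin 3 → ℝ} (hr : ∑ k, r k ^ 2 = 1) :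
    (blochState r).PosSemidef :=
  (isHermitian_blochState r).posSemidef_of_isIdempotentElem (isIdempotentElem_blochState hr)

lemma one_sub_blochState (r : Fin 3 → ℝ) : 1 - blochState r = blochState (-r) := by
  ext i j
  fin_cases i <;> fin_cases j <;> simp [blochState_eq] <;> ring

lemma sum_smul_blochState_eq_zero {α : Type*} (s : Finset α) (c : α → ℝ)
    (r : α → Fin 3 → ℝ) (hc : ∑ a ∈ s, c a = 0) (hcr : ∀ k, ∑ a ∈ s, c a * r a k = 0) :
    ∑ a ∈ s, c a • blochState (r a) = 0 := by
  have hsum : ∑ a ∈ s, c a • blochState (r a) =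
      (2 : ℂ)⁻¹ • ((∑ a ∈ s, c a) • 1 + ∑ k, (∑ a ∈ s, c a * r a k) • pauli k) := by
    simp only [blochState, smul_comm (c _) (2⁻¹ : ℂ), smul_add, sum_add_distrib, sum_smul,
      smul_sum, smul_smul]
    rw [sum_comm]
  simp [hsum, hc, hcr]

noncomputable def chuangState (a : Fin 3 → ZMod 2) : Matrix (Fin 2) (Fin 2) ℂ :=
  blochState fun k => spin (a k) / √3

lemma posSemidef_chuangState (a : Fin 3 → ZMod 2) : (chuangState a).PosSemidef := by
  refine posSemidef_blochState ?_
  simp only [Fin.sum_univ_three, sq, div_mul_div_comm, spin_mul_self,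
    Real.mul_self_sqrt (by norm_num : (0 : ℝ) ≤ 3)]
  norm_num

noncomputable def chuangDecoder (k : Fin 3) : Matrix (Fin 2) (Fin 2) ℂ :=
  blochState (Pi.single k 1)

lemma posSemidef_chuangDecoder (k : Fin 3) : (chuangDecoder k).PosSemidef :=
  posSemidef_blochState (by simp [sq, Pi.single_apply])

lemma posSemidef_one_sub_chuangDecoder (k : Fin 3) : (1 - chuangDecoder k).PosSemidef := by
  rw [chuangDecoder, one_sub_blochState]
  exact posSemidef_blochState (by simp [sq, Pi.single_apply])

lemma re_trace_chuangState_mul_chuangDecoder (a : Fin 3 → ZMod 2) (k : Fin 3) :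
    (chuangState a * chuangDecoder k).trace.re = 1 / 2 * (1 + spin (a k) / √3) := by
  simp [chuangState, chuangDecoder, trace_blochState_mul_blochState, Pi.single_apply]
  ring

lemma trace_chuangState (a : Fin 3 → ZMod 2) : (chuangState a).trace = 1 :=
  trace_blochState _

lemma sum_spin_smul_chuangState_eq_zero {T : Finset (Fin 3)} (hT : 2 ≤ T.card) :
    ∑ a, spin (∑ i ∈ T, a i) • chuangState a = 0 :=
  sum_smul_blochState_eq_zero _ _ _ (sum_spin_sum_eq_zero (card_pos.1 (by omega))) fun k => by
    simp [mul_div_assoc', ← sum_div, sum_spin_sum_mul_spin_eq_zero hT]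

section AppendCode

variable {m n : ℕ} {ι κ : Type*}

def appendState (ρ : (Fin m → ZMod 2) → Matrix ι ι ℂ) (σ : (Fin n → ZMod 2) → Matrix κ κ ℂ)
    (x : Fin (m + n) → ZMod 2) : Matrix (ι × κ) (ι × κ) ℂ :=
  ρ (fun i => x (Fin.castAdd n i)) ⊗ₖ σ (fun j => x (Fin.natAdd m j))

lemma sum_spin_smul_appendState (ρ : (Fin m → ZMod 2) → Matrix ι ι ℂ)
    (σ : (Fin n → ZMod 2) → Matrix κ κ ℂ) (S : Finset (Fin (m + n))) :
    ∑ x, spin (∑ i ∈ S, x i) • appendState ρ σ x =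
      (∑ a, spin (∑ i with Fin.castAdd n i ∈ S, a i) • ρ a) ⊗ₖ
        (∑ b, spin (∑ j with Fin.natAdd m j ∈ S, b j) • σ b) := by
  rw [← (Fin.appendEquiv m n).sum_comp, Fintype.sum_prod_type, sum_kronecker_sum]
  simp [appendState, Fin.sum_finset_add S, spin_add, smul_smul, mul_comm, smul_kronecker,
    kronecker_smul]

/-- A parity of weight `k + l - 1` has weight `k` on the first block or `l` on the second. -/
lemma sum_spin_smul_appendState_eq_zero {ρ : (Fin m → ZMod 2) → Matrix ι ι ℂ}
    {σ : (Fin n → ZMod 2) → Matrix κ κ ℂ} {k l : ℕ}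
    (hρ : ∀ T : Finset (Fin m), k ≤ T.card → ∑ a, spin (∑ i ∈ T, a i) • ρ a = 0)
    (hσ : ∀ T : Finset (Fin n), l ≤ T.card → ∑ b, spin (∑ j ∈ T, b j) • σ b = 0)
    {S : Finset (Fin (m + n))} (hS : k + l ≤ S.card + 1) :
    ∑ x, spin (∑ i ∈ S, x i) • appendState ρ σ x = 0 := by
  have hcard := Fin.sum_finset_add S fun _ => 1
  simp only [← card_eq_sum_ones] at hcard
  rw [sum_spin_smul_appendState]
  rcases le_or_gt k (univ.filter fun i => Fin.castAdd n i ∈ S).card with hk | hk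
  · rw [hρ _ hk, zero_kronecker]
  · rw [hσ _ (by omega), kronecker_zero]

variable [Fintype ι] [Fintype κ]

lemma posSemidef_appendState {ρ : (Fin m → ZMod 2) → Matrix ι ι ℂ}
    {σ : (Fin n → ZMod 2) → Matrix κ κ ℂ} (hρ : ∀ a, (ρ a).PosSemidef)
    (hσ : ∀ b, (σ b).PosSemidef) (x : Fin (m + n) → ZMod 2) : (appendState ρ σ x).PosSemidef :=
  (hρ _).kronecker (hσ _)

lemma trace_appendState {ρ : (Fin m → ZMod 2) → Matrix ι ι ℂ}
    {σ : (Fin n → ZMod 2) → Matrix κ κ ℂ} (hρ : ∀ a, (ρ a).trace = 1)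
    (hσ : ∀ b, (σ b).trace = 1) (x : Fin (m + n) → ZMod 2) : (appendState ρ σ x).trace = 1 := by
  rw [appendState, trace_kronecker, hρ, hσ, one_mul]

variable [DecidableEq ι] [DecidableEq κ]

def appendDecoder (M : Fin m → Matrix ι ι ℂ) (N : Fin n → Matrix κ κ ℂ) :
    Fin (m + n) → Matrix (ι × κ) (ι × κ) ℂ :=
  Fin.append (fun i => M i ⊗ₖ 1) (fun j => 1 ⊗ₖ N j)

lemma posSemidef_appendDecoder {M : Fin m → Matrix ι ι ℂ} {N : Fin n → Matrix κ κ ℂ}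
    (hM : ∀ i, (M i).PosSemidef) (hN : ∀ j, (N j).PosSemidef) (t : Fin (m + n)) :
    (appendDecoder M N t).PosSemidef := by
  refine Fin.addCases (fun i => ?_) (fun j => ?_) t
  · simpa [appendDecoder] using (hM i).kronecker PosSemidef.one
  · simpa [appendDecoder] using PosSemidef.one.kronecker (hN j)

lemma posSemidef_one_sub_appendDecoder {M : Fin m → Matrix ι ι ℂ} {N : Fin n → Matrix κ κ ℂ}
    (hM : ∀ i, (1 - M i).PosSemidef) (hN : ∀ j, (1 - N j).PosSemidef) (t : Fin (m + n)) :
    (1 - appendDecoder M N t).PosSemidef := by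
  refine Fin.addCases (fun i => ?_) (fun j => ?_) t
  · simpa [appendDecoder, one_sub_kronecker_one] using (hM i).kronecker PosSemidef.one
  · simpa [appendDecoder, one_sub_one_kronecker] using PosSemidef.one.kronecker (hN j)

lemma re_trace_appendState_mul_appendDecoder {ρ : (Fin m → ZMod 2) → Matrix ι ι ℂ}
    {σ : (Fin n → ZMod 2) → Matrix κ κ ℂ} {M : Fin m → Matrix ι ι ℂ} {N : Fin n → Matrix κ κ ℂ}
    {p : ZMod 2 → ℝ} (hρ₁ : ∀ a, (ρ a).trace = 1) (hσ₁ : ∀ b, (σ b).trace = 1)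
    (hρ : ∀ a i, (ρ a * M i).trace.re = p (a i)) (hσ : ∀ b j, (σ b * N j).trace.re = p (b j))
    (x : Fin (m + n) → ZMod 2) (t : Fin (m + n)) :
    (appendState ρ σ x * appendDecoder M N t).trace.re = p (x t) := by
  refine Fin.addCases (fun i => ?_) (fun j => ?_) t
  · simp [appendState, appendDecoder, ← mul_kronecker_mul, trace_kronecker, hσ₁, hρ]
  · simp [appendState, appendDecoder, ← mul_kronecker_mul, trace_kronecker, hρ₁, hσ]

end AppendCode

/-- There is an odd-parity-oblivious quantum random access code of 6 bits
(hiding `x_S` for every odd-size subset `S` with `|S| ≥ 3`) in which every bit is decoded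
with probability exactly `(1/2)(1 + 1/√3)`, i.e. with bias `1/√3 > 1/√6`. -/
theorem exists_odd_parity_oblivious_qrac_six_bits :
    ∃ (d : ℕ), 1 ≤ d ∧
    ∃ (ρ : (Fin 6 → ZMod 2) → Matrix (Fin d) (Fin d) ℂ)
      (M : Fin 6 → Matrix (Fin d) (Fin d) ℂ),
      (∀ x, (ρ x).PosSemidef) ∧
      (∀ x, (ρ x).trace = 1) ∧
      (∀ t, (M t).IsHermitian) ∧
      (∀ t, (M t).PosSemidef) ∧
      (∀ t, ((1 : Matrix (Fin d) (Fin d) ℂ) - M t).PosSemidef) ∧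
      (∀ S : Finset (Fin 6), Odd S.card → 3 ≤ S.card →
        ∑ x ∈ Finset.univ.filter (fun x : Fin 6 → ZMod 2 => ∑ i ∈ S, x i = 0), ρ x =
        ∑ x ∈ Finset.univ.filter (fun x : Fin 6 → ZMod 2 => ∑ i ∈ S, x i = 1), ρ x) ∧
      (∀ (x : Fin 6 → ZMod 2) (t : Fin 6),
        ((ρ x * M t).trace).re =
          (1 / 2) * (1 + (if x t = 0 then (1 : ℝ) else -1) / Real.sqrt 3)) := by
  let R := reindexAlgEquiv ℂ ℂ (finProdFinEquiv : Fin 2 × Fin 2 ≃ Fin 4)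
  have hR (A : Matrix (Fin 2 × Fin 2) (Fin 2 × Fin 2) ℂ) : (R A).PosSemidef ↔ A.PosSemidef :=
    posSemidef_submatrix_equiv _
  have hρ := posSemidef_appendState (m := 3) (n := 3) posSemidef_chuangState
    posSemidef_chuangState
  have hρ₁ := trace_appendState (m := 3) (n := 3) trace_chuangState trace_chuangState
  have hM := posSemidef_appendDecoder (m := 3) (n := 3) posSemidef_chuangDecoder
    posSemidef_chuangDecoder
  have hM₁ := posSemidef_one_sub_appendDecoder (m := 3) (n := 3)
    posSemidef_one_sub_chuangDecoder posSemidef_one_sub_chuangDecoder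
  have hdecode := re_trace_appendState_mul_appendDecoder (p := fun z => 1 / 2 * (1 + spin z / √3))
    trace_chuangState trace_chuangState re_trace_chuangState_mul_chuangDecoder
    re_trace_chuangState_mul_chuangDecoder
  refine ⟨4, by norm_num, fun x => R (appendState chuangState chuangState x),
    fun t => R (appendDecoder chuangDecoder chuangDecoder t), fun x => (hR _).2 (hρ x),
    fun x => ?_, fun t => ((hR _).2 (hM t)).isHermitian, fun t => (hR _).2 (hM t),
    fun t => by rw [← map_one R, ← map_sub, hR]; exact hM₁ t, fun S _ hS => ?_,
    fun x t => ?_⟩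
  · rw [coe_reindexAlgEquiv, trace_reindex, hρ₁]
  · rw [← map_sum, ← map_sum]
    exact congrArg R <| sum_filter_eq_zero_eq_sum_filter_eq_one _ _ _ <|
      sum_spin_smul_appendState_eq_zero (k := 2) (l := 2)
        (fun _ => sum_spin_smul_chuangState_eq_zero) (fun _ => sum_spin_smul_chuangState_eq_zero)
        (by omega)
  · rw [← map_mul, coe_reindexAlgEquiv, trace_reindex]
    exact hdecode x t
end
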